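/- arXiv:2204.01770 — 6 statements merged into one kernel-verified Lean document; each statement's English description precedes it below -/
import Mathlib

section
/- There exists an absolute constant C₀ > 0 with the following property. Let A, B, C ∈ ℝ² and c > 0 be such that min{‖A−B‖, ‖A−C‖, ‖B−C‖, 2} ≥ 2c, and let a > 0 satisfy a < c²/20. Define W := {(x,b) ∈ ℝ² × [1/2, 2] : b−a ≤ ‖x−A‖ ≤ b+a, b−a ≤ ‖x−B‖ ≤ b+a, and b−a ≤ ‖x−C‖ ≤ b+a}. Then the diameter of W (as a subset of ℝ³ with the Euclidean metric) is at most C₀ · a/c². -/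
/-!
If `(x, b)` and `(y, b')` both lie in `W`, then `‖x - P‖² - ‖x - Q‖² = 2⟪x, Q - P⟫ + ‖P‖² - ‖Q‖²`,
so the annulus conditions pin `⟪x - y, B - A⟫` and `⟪x - y, C - A⟫` down to `O(a)`, and Cramer's
rule bounds `‖x - y‖` by `O(a (|AB| + |AC|) / |det (B - A, C - A)|)`. The triangle `ABC` is almost
inscribed in the circle of radius `b ≤ 2` about `x`, so the circumradius formula `abc = 4R·area`,
up to an error `O(a)`, gives `|det (B - A, C - A)| ≳ c |AB| |AC|`, whence `‖x - y‖ = O(a / c²)`.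
Finally `|b - b'| ≤ ‖x - y‖ + 2a`.
-/

open scoped ENNReal
open MeasureTheory Metric Set

/-- Projection of a point of `ℝ³` to its first two coordinates, as a point of `ℝ²`. -/
noncomputable def proj2 (z : EuclideanSpace ℝ (Fin 3)) : EuclideanSpace ℝ (Fin 2) :=
  WithLp.toLp 2 (fun i : Fin 2 => z i.castSucc)

open scoped RealInnerProductSpace

local notation "ℝ²" => EuclideanSpace ℝ (Fin 2)

theorem abs_sq_sub_sq_le {r s b a : ℝ} (hab : a ≤ b) (hr : r ∈ Icc (b - a) (b + a))
    (hs : s ∈ Icc (b - a) (b + a)) : |r ^ 2 - s ^ 2| ≤ 4 * a * b := by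
  obtain ⟨hr₁, hr₂⟩ := hr
  obtain ⟨hs₁, hs₂⟩ := hs
  rw [abs_sub_le_iff]
  constructor <;> nlinarith

theorem abs_sub_le_norm_sub_add {E : Type*} [SeminormedAddCommGroup E] {x y P : E} {a b b' : ℝ}
    (hx : ‖x - P‖ ∈ Icc (b - a) (b + a)) (hy : ‖y - P‖ ∈ Icc (b' - a) (b' + a)) :
    |b - b'| ≤ ‖x - y‖ + 2 * a := by
  have h := abs_le.1 (abs_norm_sub_norm_le (x - P) (y - P))
  rw [sub_sub_sub_cancel_right] at h
  rw [abs_le]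
  constructor <;> linarith [hx.1, hx.2, hy.1, hy.2]

section InnerProductSpace

variable {F : Type*} [NormedAddCommGroup F] [InnerProductSpace ℝ F]

theorem two_mul_inner_sub_sub_eq (x y P Q : F) :
    2 * ⟪x - y, Q - P⟫ = (‖x - P‖ ^ 2 - ‖x - Q‖ ^ 2) - (‖y - P‖ ^ 2 - ‖y - Q‖ ^ 2) := by
  simp only [norm_sub_sq_real, inner_sub_left, inner_sub_right]
  ring

theorem abs_inner_sub_sub_le {x y P Q : F} {a b b' : ℝ} (hb : a ≤ b) (hb' : a ≤ b')
    (hxP : ‖x - P‖ ∈ Icc (b - a) (b + a)) (hxQ : ‖x - Q‖ ∈ Icc (b - a) (b + a))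
    (hyP : ‖y - P‖ ∈ Icc (b' - a) (b' + a)) (hyQ : ‖y - Q‖ ∈ Icc (b' - a) (b' + a)) :
    |⟪x - y, Q - P⟫| ≤ 2 * a * (b + b') := by
  have h := two_mul_inner_sub_sub_eq x y P Q
  have hx := abs_le.1 (abs_sq_sub_sq_le hb hxP hxQ)
  have hy := abs_le.1 (abs_sq_sub_sq_le hb' hyP hyQ)
  rw [abs_le]
  constructor <;> linarith

theorem norm_sq_smul_sub_norm_sq_smul (p q : F) :
    ‖‖p‖ ^ 2 • q - ‖q‖ ^ 2 • p‖ = ‖p‖ * ‖q‖ * ‖p - q‖ := by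
  refine (sq_eq_sq₀ (norm_nonneg _) (by positivity)).1 ?_
  simp only [norm_sub_sq_real, norm_smul, inner_smul_left, inner_smul_right, mul_pow,
    Real.norm_eq_abs, sq_abs, real_inner_comm p q, RCLike.conj_to_real]
  ring

end InnerProductSpace

def det2 (p q : ℝ²) : ℝ := p 0 * q 1 - p 1 * q 0

/-- In the plane, `det2 p q • u` is the rotation by a right angle of `⟪u, p⟫ • q - ⟪u, q⟫ • p`. -/
theorem norm_mul_abs_det2 (u p q : ℝ²) :
    ‖u‖ * |det2 p q| = ‖⟪u, p⟫ • q - ⟪u, q⟫ • p‖ := by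
  refine (sq_eq_sq₀ (by positivity) (norm_nonneg _)).1 ?_
  simp only [mul_pow, sq_abs, EuclideanSpace.norm_sq_eq, Real.norm_eq_abs, det2,
    EuclideanSpace.inner_eq_star_dotProduct, dotProduct, Pi.star_apply, star_trivial,
    Fin.sum_univ_two, PiLp.sub_apply, PiLp.smul_apply, smul_eq_mul]
  ring

theorem norm_mul_abs_det2_le (u p q : ℝ²) :
    ‖u‖ * |det2 p q| ≤ |⟪u, p⟫| * ‖q‖ + |⟪u, q⟫| * ‖p‖ := by
  rw [norm_mul_abs_det2, ← Real.norm_eq_abs, ← Real.norm_eq_abs, ← norm_smul, ← norm_smul]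
  exact norm_sub_le _ _

/-- A perturbed form of `abc = 4R·area`: the error terms vanish when `A`, `B`, `C` lie on a circle
about `x`. -/
theorem norm_sub_mul_norm_sub_mul_norm_sub_le (x A B C : ℝ²) :
    ‖B - A‖ * ‖C - A‖ * ‖B - C‖ ≤ 2 * ‖x - A‖ * |det2 (B - A) (C - A)|
      + |‖x - A‖ ^ 2 - ‖x - B‖ ^ 2| * ‖C - A‖ + |‖x - A‖ ^ 2 - ‖x - C‖ ^ 2| * ‖B - A‖ := by
  have hB : ‖B - A‖ ^ 2 = 2 * ⟪x - A, B - A⟫ - (‖x - A‖ ^ 2 - ‖x - B‖ ^ 2) := by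
    rw [show x - B = (x - A) - (B - A) by abel, norm_sub_sq_real (x - A)]; ring
  have hC : ‖C - A‖ ^ 2 = 2 * ⟪x - A, C - A⟫ - (‖x - A‖ ^ 2 - ‖x - C‖ ^ 2) := by
    rw [show x - C = (x - A) - (C - A) by abel, norm_sub_sq_real (x - A)]; ring
  set p := B - A
  set q := C - A
  set δB := ‖x - A‖ ^ 2 - ‖x - B‖ ^ 2
  set δC := ‖x - A‖ ^ 2 - ‖x - C‖ ^ 2
  have hsplit : ‖p‖ ^ 2 • q - ‖q‖ ^ 2 • p
      = (2 : ℝ) • (⟪x - A, p⟫ • q - ⟪x - A, q⟫ • p) - (δB • q - δC • p) := by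
    rw [hB, hC]
    module
  calc ‖p‖ * ‖q‖ * ‖B - C‖
      = ‖‖p‖ ^ 2 • q - ‖q‖ ^ 2 • p‖ := by
        rw [norm_sq_smul_sub_norm_sq_smul, sub_sub_sub_cancel_right]
    _ ≤ ‖(2 : ℝ) • (⟪x - A, p⟫ • q - ⟪x - A, q⟫ • p)‖ + ‖δB • q - δC • p‖ := by
        rw [hsplit]
        exact norm_sub_le _ _
    _ ≤ 2 * ‖x - A‖ * |det2 p q| + (|δB| * ‖q‖ + |δC| * ‖p‖) := by
        rw [norm_smul, Real.norm_two, ← norm_mul_abs_det2, mul_assoc]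
        gcongr
        refine (norm_sub_le _ _).trans_eq ?_
        rw [norm_smul, norm_smul, Real.norm_eq_abs, Real.norm_eq_abs]
    _ = _ := by ring

theorem le_abs_det2_of_mem_annuli {x A B C : ℝ²} {a b c : ℝ} (hc : 0 < c) (hc₁ : c ≤ 1)
    (ha : a ≤ c ^ 2 / 20) (hb : b ∈ Icc (1 / 2 : ℝ) 2)
    (hAB : 2 * c ≤ ‖A - B‖) (hAC : 2 * c ≤ ‖A - C‖) (hBC : 2 * c ≤ ‖B - C‖)
    (hxA : ‖x - A‖ ∈ Icc (b - a) (b + a)) (hxB : ‖x - B‖ ∈ Icc (b - a) (b + a))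
    (hxC : ‖x - C‖ ∈ Icc (b - a) (b + a)) :
    c * (‖B - A‖ * ‖C - A‖) / 4 ≤ |det2 (B - A) (C - A)| := by
  rw [norm_sub_rev A B] at hAB
  rw [norm_sub_rev A C] at hAC
  have ha₀ : 0 ≤ a := by linarith [hxA.1, hxA.2]
  have hab : a ≤ b := by nlinarith [hb.1]
  have hδ : 4 * a * b ≤ 2 * c ^ 2 / 5 := by nlinarith [hb.2]
  have hδB := (abs_sq_sub_sq_le hab hxA hxB).trans hδ
  have hδC := (abs_sq_sub_sq_le hab hxA hxC).trans hδ
  have hformula := norm_sub_mul_norm_sub_mul_norm_sub_le x A B C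
  have hr : ‖x - A‖ ≤ 41 / 20 := by nlinarith [hxA.2, hb.2]
  set L := ‖B - A‖
  set M := ‖C - A‖
  set D := |det2 (B - A) (C - A)|
  have hL₀ : 0 ≤ L := norm_nonneg _
  have hM₀ : 0 ≤ M := norm_nonneg _
  have hL : |‖x - A‖ ^ 2 - ‖x - C‖ ^ 2| * L ≤ c / 5 * (L * M) := by
    calc _ ≤ 2 * c ^ 2 / 5 * L := by gcongr
      _ ≤ c / 5 * (L * M) := by nlinarith [mul_nonneg (mul_nonneg hc.le hL₀) (sub_nonneg.2 hAC)]
  have hM : |‖x - A‖ ^ 2 - ‖x - B‖ ^ 2| * M ≤ c / 5 * (L * M) := by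
    calc _ ≤ 2 * c ^ 2 / 5 * M := by gcongr
      _ ≤ c / 5 * (L * M) := by nlinarith [mul_nonneg (mul_nonneg hc.le hM₀) (sub_nonneg.2 hAB)]
  have hLM : L * M * (2 * c) ≤ L * M * ‖B - C‖ := by gcongr
  have hrD : ‖x - A‖ * D ≤ 41 / 20 * D := by gcongr
  nlinarith [mul_nonneg hc.le (mul_nonneg hL₀ hM₀)]

theorem norm_sub_mul_abs_det2_le {x y A B C : ℝ²} {a b b' : ℝ} (hb : a ≤ b) (hb' : a ≤ b')
    (hxA : ‖x - A‖ ∈ Icc (b - a) (b + a)) (hxB : ‖x - B‖ ∈ Icc (b - a) (b + a))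
    (hxC : ‖x - C‖ ∈ Icc (b - a) (b + a)) (hyA : ‖y - A‖ ∈ Icc (b' - a) (b' + a))
    (hyB : ‖y - B‖ ∈ Icc (b' - a) (b' + a)) (hyC : ‖y - C‖ ∈ Icc (b' - a) (b' + a)) :
    ‖x - y‖ * |det2 (B - A) (C - A)| ≤ 2 * a * (b + b') * (‖B - A‖ + ‖C - A‖) := by
  have hB := abs_inner_sub_sub_le hb hb' hxA hxB hyA hyB
  have hC := abs_inner_sub_sub_le hb hb' hxA hxC hyA hyC
  calc _ ≤ |⟪x - y, B - A⟫| * ‖C - A‖ + |⟪x - y, C - A⟫| * ‖B - A‖ := norm_mul_abs_det2_le _ _ _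
    _ ≤ 2 * a * (b + b') * ‖C - A‖ + 2 * a * (b + b') * ‖B - A‖ := by gcongr
    _ = _ := by ring

theorem norm_sub_le_of_mem_three_annuli {x y A B C : ℝ²} {a b b' c : ℝ}
    (hc : 0 < c) (hc₁ : c ≤ 1) (ha : a ≤ c ^ 2 / 20)
    (hb : b ∈ Icc (1 / 2 : ℝ) 2) (hb' : b' ∈ Icc (1 / 2 : ℝ) 2)
    (hAB : 2 * c ≤ ‖A - B‖) (hAC : 2 * c ≤ ‖A - C‖) (hBC : 2 * c ≤ ‖B - C‖)
    (hxA : ‖x - A‖ ∈ Icc (b - a) (b + a)) (hxB : ‖x - B‖ ∈ Icc (b - a) (b + a))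
    (hxC : ‖x - C‖ ∈ Icc (b - a) (b + a)) (hyA : ‖y - A‖ ∈ Icc (b' - a) (b' + a))
    (hyB : ‖y - B‖ ∈ Icc (b' - a) (b' + a)) (hyC : ‖y - C‖ ∈ Icc (b' - a) (b' + a)) :
    ‖x - y‖ ≤ 32 * a / c ^ 2 := by
  have ha₀ : 0 ≤ a := by linarith [hxA.1, hxA.2]
  have ha₁ : a ≤ 1 / 2 := by nlinarith
  have hdet := le_abs_det2_of_mem_annuli hc hc₁ ha hb hAB hAC hBC hxA hxB hxC
  have hcramer := norm_sub_mul_abs_det2_le (ha₁.trans hb.1) (ha₁.trans hb'.1)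
    hxA hxB hxC hyA hyB hyC
  rw [norm_sub_rev A B] at hAB
  rw [norm_sub_rev A C] at hAC
  set L := ‖B - A‖
  set M := ‖C - A‖
  have hLM : 0 < L * M := mul_pos (by linarith) (by linarith)
  have hsum : c * (L + M) ≤ L * M := by nlinarith
  have h8a : 2 * a * (b + b') ≤ 8 * a := by nlinarith [hb.2, hb'.2]
  have hxy : ‖x - y‖ * c ^ 2 * (L * M) ≤ 32 * a * (L * M) := by
    calc ‖x - y‖ * c ^ 2 * (L * M) = 4 * c * (‖x - y‖ * (c * (L * M) / 4)) := by ring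
      _ ≤ 4 * c * (‖x - y‖ * |det2 (B - A) (C - A)|) := by gcongr
      _ ≤ 4 * c * (8 * a * (L + M)) := by
        gcongr 4 * c * ?_
        exact hcramer.trans (by gcongr)
      _ = 32 * a * (c * (L + M)) := by ring
      _ ≤ 32 * a * (L * M) := by gcongr
  rw [le_div_iff₀ (by positivity)]
  exact le_of_mul_le_mul_right hxy hLM

theorem dist_sq_eq_dist_proj2_sq_add (w w' : EuclideanSpace ℝ (Fin 3)) :
    dist w w' ^ 2 = dist (proj2 w) (proj2 w') ^ 2 + (w 2 - w' 2) ^ 2 := by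
  simp only [EuclideanSpace.dist_sq_eq, Fin.sum_univ_succ, Fin.sum_univ_zero, proj2,
    Real.dist_eq, sq_abs, Fin.isValue, Fin.succ_zero_eq_one, Fin.succ_one_eq_two, add_zero,
    Fin.castSucc_zero, Fin.castSucc_one]
  ring

theorem dist_le_dist_proj2_add (w w' : EuclideanSpace ℝ (Fin 3)) :
    dist w w' ≤ dist (proj2 w) (proj2 w') + |w 2 - w' 2| := by
  refine (pow_le_pow_iff_left₀ dist_nonneg (by positivity) two_ne_zero).1 ?_
  rw [dist_sq_eq_dist_proj2_sq_add, add_sq, sq_abs]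
  nlinarith [mul_nonneg (dist_nonneg (x := proj2 w) (y := proj2 w')) (abs_nonneg (w 2 - w' 2))]

/-- **Lemma 2.5 (three-annuli lemma).** There is an absolute constant `C₀ > 0` such that:
if `A, B, C ∈ ℝ²` satisfy `min {‖A−B‖, ‖A−C‖, ‖B−C‖, 2} ≥ 2c` and `0 < a < c²/20`, then the
set `W` of pairs `(x, b) ∈ ℝ² × [1/2, 2]` (viewed as a subset of Euclidean `ℝ³`) with
`b − a ≤ ‖x − P‖ ≤ b + a` for every `P ∈ {A, B, C}` has diameter at most `C₀ · a / c²`. -/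
theorem diam_three_annuli_parameter_set :
    ∃ C₀ : ℝ, 0 < C₀ ∧
      ∀ (A B C : EuclideanSpace ℝ (Fin 2)) (c a : ℝ), 0 < c →
        2 * c ≤ min (min (‖A - B‖) (‖A - C‖)) (min (‖B - C‖) 2) →
        0 < a → a < c ^ 2 / 20 →
        Metric.diam {w : EuclideanSpace ℝ (Fin 3) |
            w 2 ∈ Set.Icc (1 / 2 : ℝ) 2 ∧
            (w 2 - a ≤ ‖proj2 w - A‖ ∧ ‖proj2 w - A‖ ≤ w 2 + a) ∧
            (w 2 - a ≤ ‖proj2 w - B‖ ∧ ‖proj2 w - B‖ ≤ w 2 + a) ∧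
            (w 2 - a ≤ ‖proj2 w - C‖ ∧ ‖proj2 w - C‖ ≤ w 2 + a)} ≤ C₀ * a / c ^ 2 := by
  refine ⟨66, by norm_num, fun A B C c a hc hmin ha₀ ha => ?_⟩
  simp only [le_min_iff] at hmin
  obtain ⟨⟨hAB, hAC⟩, hBC, hc₁⟩ := hmin
  refine diam_le_of_forall_dist_le (by positivity) ?_
  rintro w ⟨hb, hxA, hxB, hxC⟩ w' ⟨hb', hyA, hyB, hyC⟩
  have hxy : ‖proj2 w - proj2 w'‖ ≤ 32 * a / c ^ 2 :=
    norm_sub_le_of_mem_three_annuli hc (by linarith) ha.le hb hb' hAB hAC hBC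
      hxA hxB hxC hyA hyB hyC
  have hbb' : |w 2 - w' 2| ≤ ‖proj2 w - proj2 w'‖ + 2 * a := abs_sub_le_norm_sub_add hxA hyA
  have ha_le : a ≤ a / c ^ 2 := le_div_self ha₀.le (by positivity) (by nlinarith)
  calc dist w w' ≤ ‖proj2 w - proj2 w'‖ + |w 2 - w' 2| := by
        rw [← dist_eq_norm]; exact dist_le_dist_proj2_add w w'
    _ ≤ 66 * a / c ^ 2 := by
        rw [mul_div_assoc] at hxy ⊢
        linarith
end

section
/- Let u, c, a, b be real numbers with 0 < c < 1, c < u, 0 < a < c²/20, and b ∈ [1/2, 2]. Set A = (−u, 0) and B = (u, 0) in ℝ² (so that ‖A−B‖ = 2u > 2c). Then the intersection of the two closed annuli {x ∈ ℝ² : b−a ≤ ‖x−A‖ ≤ b+a} and {x ∈ ℝ² : b−a ≤ ‖x−B‖ ≤ b+a} is contained in the rectangle {(x₁,x₂) ∈ ℝ² : |x₁| ≤ (9/2)·(a/c), |x₂| ≤ 3}. -/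
open scoped ENNReal
open MeasureTheory Metric Set

lemma eucl_norm_sq (y : EuclideanSpace ℝ (Fin 2)) :
    ‖y‖ ^ 2 = (y 0) ^ 2 + (y 1) ^ 2 := by
  rw [EuclideanSpace.norm_eq, Real.sq_sqrt (by positivity)]
  simp [Fin.sum_univ_two, sq_abs]

set_option maxHeartbeats 1000000 in
/-- **Lemma 5.1 (two-annuli lemma).** Let `0 < c < 1`, `c < u`, `0 < a < c²/20`,
`b ∈ [1/2, 2]`, and let `A = (−u, 0)`, `B = (u, 0)` in `ℝ²`. Then the intersection of the
closed annuli `{x : b−a ≤ ‖x−A‖ ≤ b+a}` and `{x : b−a ≤ ‖x−B‖ ≤ b+a}` is contained in the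
rectangle `{x : |x₁| ≤ (9/2)·(a/c), |x₂| ≤ 3}`. -/
theorem two_annuli_inter_subset_rectangle
    (u c a b : ℝ) (hc0 : 0 < c) (hc1 : c < 1) (hcu : c < u)
    (ha0 : 0 < a) (ha : a < c ^ 2 / 20) (hb : b ∈ Set.Icc (1 / 2 : ℝ) 2)
    (A B : EuclideanSpace ℝ (Fin 2))
    (hA0 : A 0 = -u) (hA1 : A 1 = 0) (hB0 : B 0 = u) (hB1 : B 1 = 0) :
    {x : EuclideanSpace ℝ (Fin 2) |
        (b - a ≤ ‖x - A‖ ∧ ‖x - A‖ ≤ b + a) ∧ (b - a ≤ ‖x - B‖ ∧ ‖x - B‖ ≤ b + a)} ⊆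
      {x : EuclideanSpace ℝ (Fin 2) | |x 0| ≤ (9 / 2) * (a / c) ∧ |x 1| ≤ 3} := by
  obtain ⟨hb1, hb2⟩ := hb
  intro x hx
  obtain ⟨⟨hA_lo, hA_hi⟩, ⟨hB_lo, hB_hi⟩⟩ := hx
  have hrA : ‖x - A‖ ^ 2 = (x 0 + u) ^ 2 + (x 1) ^ 2 := by
    rw [eucl_norm_sq]
    simp only [PiLp.sub_apply, hA0, hA1]
    ring
  have hrB : ‖x - B‖ ^ 2 = (x 0 - u) ^ 2 + (x 1) ^ 2 := by
    rw [eucl_norm_sq]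
    simp only [PiLp.sub_apply, hB0, hB1]
    ring
  have ha20 : a < 1 / 20 := by nlinarith
  have hba : 0 ≤ b - a := by linarith
  have hnA : 0 ≤ ‖x - A‖ := norm_nonneg _
  have hnB : 0 ≤ ‖x - B‖ := norm_nonneg _
  have hA2hi : ‖x - A‖ ^ 2 ≤ (b + a) ^ 2 := by nlinarith
  have hA2lo : (b - a) ^ 2 ≤ ‖x - A‖ ^ 2 := by nlinarith
  have hB2hi : ‖x - B‖ ^ 2 ≤ (b + a) ^ 2 := by nlinarith
  have hB2lo : (b - a) ^ 2 ≤ ‖x - B‖ ^ 2 := by nlinarith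
  have key : ‖x - A‖ ^ 2 - ‖x - B‖ ^ 2 = 4 * u * x 0 := by
    rw [hrA, hrB]; ring
  have hu0 : 0 < u := lt_trans hc0 hcu
  constructor
  · have habs : u * |x 0| ≤ 2 * a := by
      rcases abs_cases (x 0) with ⟨h, _⟩ | ⟨h, _⟩ <;> rw [h] <;> nlinarith
    rw [show (9 / 2 : ℝ) * (a / c) = (9 * a / 2) / c by ring, le_div_iff₀ hc0]
    nlinarith [abs_nonneg (x 0)]
  · have h1sq : (x 1) ^ 2 ≤ (b + a) ^ 2 := by nlinarith
    rw [abs_le]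
    constructor <;> nlinarith [sq_nonneg (x 1 + 3), sq_nonneg (x 1 - 3)]
end

section
/- Let A, B, C ∈ ℝ² be collinear points and c > 0 be such that min{‖A−B‖, ‖A−C‖, ‖B−C‖, 2} ≥ 2c, and let a > 0 satisfy a < c²/20. Then for every b ∈ [1/2, 2], the set W(b) := {x ∈ ℝ² : b−a ≤ ‖x−A‖ ≤ b+a, b−a ≤ ‖x−B‖ ≤ b+a, and b−a ≤ ‖x−C‖ ≤ b+a} is empty. -/
open Set

/-!
On the line through `A`, `B`, `C`, the squared distance to `x` is a monic quadratic in the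
arc-length parameter. Since its second divided difference is `1`, its values at three parameters
with mutual gaps `≥ 2c` spread over an interval of length at least `4c²`. The annuli confine
them to `[(b-a)², (b+a)²]`, of length `4ab < 4c²/10`.
-/

/-- The weights are those of the second divided difference, which is `1` for a monic quadratic. -/
theorem mul_add_mul_sub_le_of_quadratic {β γ m M s₁ s₂ s₃ : ℝ} (h₁₂ : s₁ ≤ s₂) (h₂₃ : s₂ ≤ s₃)
    (h₁ : s₁ ^ 2 + β * s₁ + γ ≤ M) (h₂ : m ≤ s₂ ^ 2 + β * s₂ + γ)
    (h₃ : s₃ ^ 2 + β * s₃ + γ ≤ M) :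
    (s₃ - s₁) * (m + (s₂ - s₁) * (s₃ - s₂)) ≤ (s₃ - s₁) * M := by
  linear_combination mul_le_mul_of_nonneg_left h₁ (sub_nonneg.2 h₂₃) +
    mul_le_mul_of_nonneg_left h₃ (sub_nonneg.2 h₁₂) +
    mul_le_mul_of_nonneg_left h₂ (sub_nonneg.2 (h₁₂.trans h₂₃))

theorem add_sq_le_of_quadratic_of_add_le {β γ d m M s₁ s₂ s₃ : ℝ} (hd : 0 < d)
    (h₁₂ : s₁ + d ≤ s₂) (h₂₃ : s₂ + d ≤ s₃)
    (h₁ : s₁ ^ 2 + β * s₁ + γ ≤ M) (h₂ : m ≤ s₂ ^ 2 + β * s₂ + γ)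
    (h₃ : s₃ ^ 2 + β * s₃ + γ ≤ M) : m + d ^ 2 ≤ M := by
  have hspread := mul_add_mul_sub_le_of_quadratic (by linarith) (by linarith) h₁ h₂ h₃
  have hgaps : d ^ 2 ≤ (s₂ - s₁) * (s₃ - s₂) := by
    rw [sq]; exact mul_le_mul (by linarith) (by linarith) hd.le (by linarith)
  linarith [le_of_mul_le_mul_left hspread (by linarith : 0 < s₃ - s₁)]

theorem add_le_of_le_of_le_abs_sub {s t d : ℝ} (hst : s ≤ t) (hd : d ≤ |s - t|) : s + d ≤ t := by
  rw [abs_sub_comm, abs_of_nonneg (sub_nonneg.2 hst)] at hd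
  linarith

theorem add_sq_le_of_quadratic_mem_Icc {β γ d m M s₁ s₂ s₃ : ℝ} (hd : 0 < d)
    (h₁₂ : d ≤ |s₁ - s₂|) (h₁₃ : d ≤ |s₁ - s₃|) (h₂₃ : d ≤ |s₂ - s₃|)
    (h₁ : s₁ ^ 2 + β * s₁ + γ ∈ Icc m M) (h₂ : s₂ ^ 2 + β * s₂ + γ ∈ Icc m M)
    (h₃ : s₃ ^ 2 + β * s₃ + γ ∈ Icc m M) : m + d ^ 2 ≤ M := by
  have h₂₁ : d ≤ |s₂ - s₁| := abs_sub_comm s₁ s₂ ▸ h₁₂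
  have h₃₁ : d ≤ |s₃ - s₁| := abs_sub_comm s₁ s₃ ▸ h₁₃
  have h₃₂ : d ≤ |s₃ - s₂| := abs_sub_comm s₂ s₃ ▸ h₂₃
  rcases le_total s₁ s₂ with o₁₂ | o₁₂ <;> rcases le_total s₂ s₃ with o₂₃ | o₂₃ <;>
    rcases le_total s₁ s₃ with o₁₃ | o₁₃ <;>
    first
    | exact add_sq_le_of_quadratic_of_add_le hd (add_le_of_le_of_le_abs_sub o₁₂ h₁₂)
        (add_le_of_le_of_le_abs_sub o₂₃ h₂₃) h₁.2 h₂.1 h₃.2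
    | exact add_sq_le_of_quadratic_of_add_le hd (add_le_of_le_of_le_abs_sub o₁₃ h₁₃)
        (add_le_of_le_of_le_abs_sub o₂₃ h₃₂) h₁.2 h₃.1 h₂.2
    | exact add_sq_le_of_quadratic_of_add_le hd (add_le_of_le_of_le_abs_sub o₁₂ h₂₁)
        (add_le_of_le_of_le_abs_sub o₁₃ h₁₃) h₂.2 h₁.1 h₃.2
    | exact add_sq_le_of_quadratic_of_add_le hd (add_le_of_le_of_le_abs_sub o₂₃ h₂₃)
        (add_le_of_le_of_le_abs_sub o₁₃ h₃₁) h₂.2 h₃.1 h₁.2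
    | exact add_sq_le_of_quadratic_of_add_le hd (add_le_of_le_of_le_abs_sub o₁₃ h₃₁)
        (add_le_of_le_of_le_abs_sub o₁₂ h₁₂) h₃.2 h₁.1 h₂.2
    | exact add_sq_le_of_quadratic_of_add_le hd (add_le_of_le_of_le_abs_sub o₂₃ h₃₂)
        (add_le_of_le_of_le_abs_sub o₁₂ h₂₁) h₃.2 h₂.1 h₁.2

variable {V : Type*} [NormedAddCommGroup V] [InnerProductSpace ℝ V]

theorem Collinear.exists_norm_eq_one_forall_eq_add_smul [Nontrivial V] {s : Set V}
    (h : Collinear ℝ s) : ∃ p₀ u : V, ‖u‖ = 1 ∧ ∀ p ∈ s, ∃ t : ℝ, p = p₀ + t • u := by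
  obtain ⟨p₀, v, hv⟩ := (collinear_iff_exists_forall_eq_smul_vadd s).1 h
  rcases eq_or_ne v 0 with rfl | hv0
  · obtain ⟨u, hu⟩ := exists_norm_eq V zero_le_one
    refine ⟨p₀, u, hu, fun p hp => ⟨0, ?_⟩⟩
    obtain ⟨r, rfl⟩ := hv p hp
    simp
  · refine ⟨p₀, (‖v‖⁻¹ : ℝ) • v, norm_smul_inv_norm hv0, fun p hp => ?_⟩
    obtain ⟨r, rfl⟩ := hv p hp
    refine ⟨r * ‖v‖, ?_⟩
    rw [smul_smul, mul_assoc, mul_inv_cancel₀ (norm_ne_zero_iff.2 hv0), mul_one, vadd_eq_add,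
      add_comm]

theorem norm_add_smul_sub_add_smul {u : V} (hu : ‖u‖ = 1) (p₀ : V) (s t : ℝ) :
    ‖(p₀ + s • u) - (p₀ + t • u)‖ = |s - t| := by
  rw [add_sub_add_left_eq_sub, ← sub_smul, norm_smul, hu, mul_one, Real.norm_eq_abs]

theorem norm_sub_add_smul_sq {u : V} (hu : ‖u‖ = 1) (x p₀ : V) (t : ℝ) :
    ‖x - (p₀ + t • u)‖ ^ 2 = t ^ 2 + (-2 * inner ℝ (x - p₀) u) * t + ‖x - p₀‖ ^ 2 := by
  rw [← sub_sub, norm_sub_sq_real, real_inner_smul_right, norm_smul, hu, Real.norm_eq_abs,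
    mul_one, sq_abs]
  ring

theorem Collinear.add_sq_le_of_norm_sub_sq_mem_Icc [Nontrivial V] {A B C x : V} {d m M : ℝ}
    (hcol : Collinear ℝ {A, B, C}) (hd : 0 < d)
    (hAB : d ≤ ‖A - B‖) (hAC : d ≤ ‖A - C‖) (hBC : d ≤ ‖B - C‖)
    (hA : ‖x - A‖ ^ 2 ∈ Icc m M) (hB : ‖x - B‖ ^ 2 ∈ Icc m M) (hC : ‖x - C‖ ^ 2 ∈ Icc m M) :
    m + d ^ 2 ≤ M := by
  obtain ⟨p₀, u, hu, hline⟩ := hcol.exists_norm_eq_one_forall_eq_add_smul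
  obtain ⟨tA, rfl⟩ := hline A (by simp)
  obtain ⟨tB, rfl⟩ := hline B (by simp)
  obtain ⟨tC, rfl⟩ := hline C (by simp)
  simp only [norm_add_smul_sub_add_smul hu] at hAB hAC hBC
  simp only [norm_sub_add_smul_sq hu] at hA hB hC
  exact add_sq_le_of_quadratic_mem_Icc hd hAB hAC hBC hA hB hC

theorem three_annuli_empty_of_collinear_general
    (A B C : EuclideanSpace ℝ (Fin 2)) (c a : ℝ)
    (hcol : Collinear ℝ ({A, B, C} : Set (EuclideanSpace ℝ (Fin 2))))
    (hc0 : 0 < c)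
    (hsep : 2 * c ≤ min (min (‖A - B‖) (‖A - C‖)) (min (‖B - C‖) 2))
    (ha : a < c ^ 2 / 20) :
    ∀ b ∈ Set.Icc (1 / 2 : ℝ) 2,
      {x : EuclideanSpace ℝ (Fin 2) |
          (b - a ≤ ‖x - A‖ ∧ ‖x - A‖ ≤ b + a) ∧
          (b - a ≤ ‖x - B‖ ∧ ‖x - B‖ ≤ b + a) ∧
          (b - a ≤ ‖x - C‖ ∧ ‖x - C‖ ≤ b + a)} = ∅ := by
  rintro b ⟨hb₁, hb₂⟩
  rw [eq_empty_iff_forall_notMem]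
  rintro x ⟨⟨hA₁, hA₂⟩, ⟨hB₁, hB₂⟩, ⟨hC₁, hC₂⟩⟩
  simp only [le_min_iff] at hsep
  obtain ⟨⟨hAB, hAC⟩, hBC, hc₁⟩ := hsep
  have hab : 0 ≤ b - a := by nlinarith
  have hmem (P : EuclideanSpace ℝ (Fin 2)) (h₁ : b - a ≤ ‖x - P‖) (h₂ : ‖x - P‖ ≤ b + a) :
      ‖x - P‖ ^ 2 ∈ Icc ((b - a) ^ 2) ((b + a) ^ 2) :=
    ⟨pow_le_pow_left₀ hab h₁ 2, pow_le_pow_left₀ (norm_nonneg _) h₂ 2⟩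
  have hspread := hcol.add_sq_le_of_norm_sub_sq_mem_Icc (by positivity) hAB hAC hBC
    (hmem A hA₁ hA₂) (hmem B hB₁ hB₂) (hmem C hC₁ hC₂)
  -- `hspread` reads `c² ≤ a b`, while `a b < 2 · c²/20`.
  nlinarith

/-- **Degenerate case of the three-annuli lemma.** If `A, B, C ∈ ℝ²` are collinear,
`min {‖A−B‖, ‖A−C‖, ‖B−C‖, 2} ≥ 2c` and `0 < a < c²/20`, then for every `b ∈ [1/2, 2]` the
intersection `W(b)` of the three closed annuli of radii `[b−a, b+a]` centered at `A`, `B`,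
`C` is empty. -/
theorem three_annuli_empty_of_collinear
    (A B C : EuclideanSpace ℝ (Fin 2)) (c a : ℝ)
    (hcol : Collinear ℝ ({A, B, C} : Set (EuclideanSpace ℝ (Fin 2))))
    (hc0 : 0 < c)
    (hsep : 2 * c ≤ min (min (‖A - B‖) (‖A - C‖)) (min (‖B - C‖) 2))
    (ha0 : 0 < a) (ha : a < c ^ 2 / 20) :
    ∀ b ∈ Set.Icc (1 / 2 : ℝ) 2,
      {x : EuclideanSpace ℝ (Fin 2) |
          (b - a ≤ ‖x - A‖ ∧ ‖x - A‖ ≤ b + a) ∧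
          (b - a ≤ ‖x - B‖ ∧ ‖x - B‖ ≤ b + a) ∧
          (b - a ≤ ‖x - C‖ ∧ ‖x - C‖ ≤ b + a)} = ∅ :=
  three_annuli_empty_of_collinear_general A B C c a hcol hc0 hsep ha
end

section
/- There exists an absolute constant K > 0 with the following property. Let A, B, C ∈ ℝ² be non-collinear points and c > 0 be such that min{‖A−B‖, ‖A−C‖, ‖B−C‖, 2} ≥ 2c, and let a > 0 satisfy a < c²/20. Let M be the circumcenter of triangle ABC and h = ‖M−A‖ its circumradius. If for some b ∈ [1/2, 2] the set W(b) := {x ∈ ℝ² : b−a ≤ ‖x−A‖ ≤ b+a, b−a ≤ ‖x−B‖ ≤ b+a, and b−a ≤ ‖x−C‖ ≤ b+a} is nonempty, then |b − h| ≤ K·a/c². -/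
open scoped ENNReal
open MeasureTheory Metric Set

open scoped RealInnerProductSpace

private lemma ann_inner_expand (x M A B : EuclideanSpace ℝ (Fin 2)) :
    2 * ⟪x - M, B - A⟫ =
      (‖x - A‖ ^ 2 - ‖x - B‖ ^ 2) - (‖M - A‖ ^ 2 - ‖M - B‖ ^ 2) := by
  have e1 := norm_sub_sq_real x A
  have e2 := norm_sub_sq_real x B
  have e3 := norm_sub_sq_real M A
  have e4 := norm_sub_sq_real M B
  have e5 : ⟪x - M, B - A⟫ = ⟪x, B⟫ - ⟪x, A⟫ - ⟪M, B⟫ + ⟪M, A⟫ := by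
    simp [inner_sub_left, inner_sub_right]; ring
  linarith [e1, e2, e3, e4, e5]

/-- Equality in Cauchy–Schwarz forces proportionality. -/
private lemma ann_cs_eq (u v : EuclideanSpace ℝ (Fin 2)) (hv : v ≠ 0)
    (h : ‖u‖ ^ 2 * ‖v‖ ^ 2 ≤ ⟪u, v⟫ ^ 2) :
    u = ((⟪u, v⟫) / ‖v‖ ^ 2) • v := by
  have hcs := real_inner_mul_inner_self_le u v
  rw [real_inner_self_eq_norm_sq, real_inner_self_eq_norm_sq] at hcs
  have heq : ⟪u, v⟫ ^ 2 = ‖u‖ ^ 2 * ‖v‖ ^ 2 := by nlinarith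
  have hq0 : (0:ℝ) < ‖v‖ ^ 2 := pow_pos (norm_pos_iff.mpr hv) 2
  have hz : (‖v‖ ^ 2) • u - ⟪u, v⟫ • v = 0 := by
    have eA : ‖(‖v‖ ^ 2) • u‖ ^ 2 = ‖v‖ ^ 4 * ‖u‖ ^ 2 := by
      rw [norm_smul, mul_pow, Real.norm_eq_abs, sq_abs]; ring
    have eB : ‖(⟪u, v⟫ : ℝ) • v‖ ^ 2 = ⟪u, v⟫ ^ 2 * ‖v‖ ^ 2 := by
      rw [norm_smul, mul_pow, Real.norm_eq_abs, sq_abs]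
    have eC : ⟪(‖v‖ ^ 2) • u, (⟪u, v⟫ : ℝ) • v⟫ = ‖v‖ ^ 2 * (⟪u, v⟫ * ⟪u, v⟫) := by
      rw [real_inner_smul_left, real_inner_smul_right]
    have hn : ‖(‖v‖ ^ 2) • u - ⟪u, v⟫ • v‖ ^ 2 = 0 := by
      rw [norm_sub_sq_real, eA, eB, eC]
      linear_combination (-(‖v‖ ^ 2)) * heq
    have h0 := pow_eq_zero_iff (n := 2) (by norm_num) |>.mp hn
    exact norm_eq_zero.mp h0
  have h7 : (‖v‖ ^ 2) • u = ⟪u, v⟫ • v := by rwa [sub_eq_zero] at hz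
  calc u = (‖v‖ ^ 2)⁻¹ • ((‖v‖ ^ 2) • u) := by
        rw [smul_smul, inv_mul_cancel₀ (ne_of_gt hq0), one_smul]
  _ = (‖v‖ ^ 2)⁻¹ • (⟪u, v⟫ • v) := by rw [h7]
  _ = _ := by rw [smul_smul, div_eq_inv_mul]

/-- Non-collinearity gives strict Cauchy–Schwarz for the edge vectors. -/
private lemma ann_strictCS (A B C : EuclideanSpace ℝ (Fin 2))
    (hncol : ¬ Collinear ℝ ({A, B, C} : Set (EuclideanSpace ℝ (Fin 2))))
    (hv : C - A ≠ 0) :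
    ⟪B - A, C - A⟫ ^ 2 < ‖B - A‖ ^ 2 * ‖C - A‖ ^ 2 := by
  rcases lt_or_ge (⟪B - A, C - A⟫ ^ 2) (‖B - A‖ ^ 2 * ‖C - A‖ ^ 2) with h | h
  · exact h
  exfalso
  have h6 := ann_cs_eq (B - A) (C - A) hv h
  have hB : B = AffineMap.lineMap (k := ℝ) A C ((⟪B - A, C - A⟫) / ‖C - A‖ ^ 2) := by
    rw [AffineMap.lineMap_apply]
    have hvs : (C -ᵥ A : EuclideanSpace ℝ (Fin 2)) = C - A := rfl
    rw [hvs, ← h6]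
    exact (sub_add_cancel B A).symm
  apply hncol
  have hmem : B ∈ line[ℝ, A, C] := by
    rw [hB]; exact AffineMap.lineMap_mem_affineSpan_pair _ _ _
  have hcol := collinear_insert_of_mem_affineSpan_pair hmem
  rwa [Set.insert_comm] at hcol

private lemma ann_num0 (a b IU RA RB : ℝ) (ha : 0 < a) (hba : 0 ≤ b - a)
    (hF : 2 * IU = RA ^ 2 - RB ^ 2) (h1 : b - a ≤ RA) (h2 : RA ≤ b + a)
    (h3 : b - a ≤ RB) (h4 : RB ≤ b + a) : |IU| ≤ 2 * a * b := by
  rw [abs_le]; constructor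
  · nlinarith
  · nlinarith

private lemma ann_num1 (e Nu Nv S IU IV W : ℝ)
    (he : 0 ≤ e) (hNuNv : 0 ≤ Nu * Nv)
    (hIU : |IU| ≤ e) (hIV : |IV| ≤ e) (hS : |S| ≤ Nu * Nv)
    (hI2 : W ^ 2 * (Nu ^ 2 * Nv ^ 2 - S ^ 2)
      = Nv ^ 2 * IU ^ 2 - 2 * S * IU * IV + Nu ^ 2 * IV ^ 2) :
    W ^ 2 * (Nu ^ 2 * Nv ^ 2 - S ^ 2) ≤ e ^ 2 * (Nu + Nv) ^ 2 := by
  obtain ⟨l1, r1⟩ := abs_le.mp hIU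
  obtain ⟨l2, r2⟩ := abs_le.mp hIV
  have t1 : IU ^ 2 ≤ e ^ 2 := by nlinarith
  have t2 : IV ^ 2 ≤ e ^ 2 := by nlinarith
  have habs : |IU * IV| ≤ e * e := by
    rw [abs_mul]; exact mul_le_mul hIU hIV (abs_nonneg _) he
  have habs2 : |S * (IU * IV)| ≤ (Nu * Nv) * (e * e) := by
    rw [abs_mul]; exact mul_le_mul hS habs (abs_nonneg _) hNuNv
  have t3 : -(2 * (S * (IU * IV))) ≤ 2 * ((Nu * Nv) * (e * e)) := by
    have hna := neg_abs_le (S * (IU * IV))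
    linarith [habs2]
  have u1 : Nv ^ 2 * IU ^ 2 ≤ Nv ^ 2 * e ^ 2 := mul_le_mul_of_nonneg_left t1 (sq_nonneg Nv)
  have u2 : Nu ^ 2 * IV ^ 2 ≤ Nu ^ 2 * e ^ 2 := mul_le_mul_of_nonneg_left t2 (sq_nonneg Nu)
  nlinarith [hI2, u1, u2, t3]

private lemma ann_num2 (c e Nu Nv Nw H W G : ℝ)
    (hc : 0 < c) (he : 0 ≤ e) (hW : 0 ≤ W) (hH : 0 ≤ H)
    (hnu : 2 * c ≤ Nu) (hnv : 2 * c ≤ Nv) (hnw : 2 * c ≤ Nw)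
    (hI1 : 4 * H ^ 2 * G = (Nu * Nv * Nw) ^ 2)
    (h1 : W ^ 2 * G ≤ e ^ 2 * (Nu + Nv) ^ 2) :
    W * c ^ 2 ≤ e * H := by
  have hNu0 : 0 < Nu := by linarith
  have hNv0 : 0 < Nv := by linarith
  have hNw0 : 0 < Nw := by linarith
  have hNuNv0 : 0 ≤ Nu * Nv := by positivity
  have e1 : (W * (Nu * Nv) * Nw) ^ 2 = 4 * H ^ 2 * (W ^ 2 * G) := by
    linear_combination (-(W ^ 2)) * hI1
  have h2 := mul_le_mul_of_nonneg_left h1 (by positivity : (0:ℝ) ≤ 4 * H ^ 2)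
  have I4 : (W * (Nu * Nv) * Nw) ^ 2 ≤ (2 * e * H * (Nu + Nv)) ^ 2 := by
    nlinarith [e1, h2]
  have hL0 : 0 ≤ W * (Nu * Nv) * Nw := mul_nonneg (mul_nonneg hW hNuNv0) (le_of_lt hNw0)
  have hR0 : 0 ≤ 2 * e * H * (Nu + Nv) := by
    apply mul_nonneg
    · apply mul_nonneg
      · linarith
      · exact hH
    · linarith
  have I5 : W * (Nu * Nv) * Nw ≤ 2 * e * H * (Nu + Nv) := by
    nlinarith [I4, hL0, hR0]
  have hcsum : c * (Nu + Nv) ≤ Nu * Nv := by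
    nlinarith [mul_nonneg (by linarith : (0:ℝ) ≤ Nu - 2 * c)
      (by linarith : (0:ℝ) ≤ Nv - 2 * c)]
  have h3 : W * (Nu * Nv) * (2 * c) ≤ W * (Nu * Nv) * Nw :=
    mul_le_mul_of_nonneg_left hnw (mul_nonneg hW hNuNv0)
  have h5 : c * (W * (Nu * Nv) * (2 * c)) ≤ c * (2 * e * H * (Nu + Nv)) :=
    mul_le_mul_of_nonneg_left (le_trans h3 I5) (le_of_lt hc)
  have h6 : 2 * e * H * (c * (Nu + Nv)) ≤ 2 * e * H * (Nu * Nv) :=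
    mul_le_mul_of_nonneg_left hcsum (by
      apply mul_nonneg
      · linarith
      · exact hH)
  nlinarith [h5, h6, mul_pos hNu0 hNv0]

private lemma ann_num3 (a b c H W RA : ℝ)
    (hc : 0 < c) (hc1 : c ≤ 1) (ha : 0 < a) (ha20 : a < c ^ 2 / 20)
    (hb1 : 1 / 2 ≤ b) (hb2 : b ≤ 2)
    (hW : 0 ≤ W) (hH : 0 ≤ H)
    (hI6 : W * c ^ 2 ≤ (2 * a * b) * H)
    (hRA1 : b - a ≤ RA) (hRA2 : RA ≤ b + a)
    (hFW : |RA - H| ≤ W) (hFH : H ≤ RA + W) :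
    |b - H| ≤ 100 * a / c ^ 2 := by
  have hc2 : (0:ℝ) < c ^ 2 := by positivity
  have ha20' : a ≤ 1 / 20 := by nlinarith
  have I7 : W * c ^ 2 ≤ 4 * a * H := by
    nlinarith [hI6, mul_le_mul_of_nonneg_right (by nlinarith : 2 * a * b ≤ 4 * a) hH]
  have hWH : W ≤ H / 5 := by
    have h1 : W * c ^ 2 ≤ (c ^ 2 / 5) * H := by nlinarith [I7, hH, ha20]
    nlinarith [h1, hc2]
  have hH3 : H ≤ 3 := by nlinarith [hFH, hRA2, hWH]
  have I8 : W * c ^ 2 ≤ 12 * a := by nlinarith [I7, hH3, ha]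
  have habsH : |b - H| ≤ a + W := by
    have h1 := abs_sub_le b RA H
    have h2 : |b - RA| ≤ a := abs_le.mpr ⟨by linarith, by linarith⟩
    linarith [h1, h2, hFW]
  rw [le_div_iff₀ hc2]
  have hsq : c ^ 2 ≤ 1 := by nlinarith
  nlinarith [mul_le_mul_of_nonneg_right habsH (le_of_lt hc2), I8, abs_nonneg (b - H),
    mul_le_mul_of_nonneg_left hsq (le_of_lt ha)]

set_option maxHeartbeats 1000000 in
/-- **Radius localization in the three-annuli lemma.** There is an absolute constant `K > 0`
such that: if `A, B, C ∈ ℝ²` are non-collinear, `min {‖A−B‖, ‖A−C‖, ‖B−C‖, 2} ≥ 2c`,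
`0 < a < c²/20`, `M` is the circumcenter of `△ABC` and `h = ‖M−A‖` is the circumradius,
then for any `b ∈ [1/2, 2]` for which the intersection `W(b)` of the three closed annuli of
radii `[b−a, b+a]` centered at `A`, `B`, `C` is nonempty, one has `|b − h| ≤ K·a/c²`. -/
theorem three_annuli_nonempty_radius_estimate :
    ∃ K : ℝ, 0 < K ∧
      ∀ (A B C M : EuclideanSpace ℝ (Fin 2)) (c a : ℝ),
        ¬ Collinear ℝ ({A, B, C} : Set (EuclideanSpace ℝ (Fin 2))) →
        0 < c →
        2 * c ≤ min (min (‖A - B‖) (‖A - C‖)) (min (‖B - C‖) 2) →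
        0 < a → a < c ^ 2 / 20 →
        ‖M - A‖ = ‖M - B‖ → ‖M - A‖ = ‖M - C‖ →
        ∀ b ∈ Set.Icc (1 / 2 : ℝ) 2,
          {x : EuclideanSpace ℝ (Fin 2) |
              (b - a ≤ ‖x - A‖ ∧ ‖x - A‖ ≤ b + a) ∧
              (b - a ≤ ‖x - B‖ ∧ ‖x - B‖ ≤ b + a) ∧
              (b - a ≤ ‖x - C‖ ∧ ‖x - C‖ ≤ b + a)}.Nonempty →
          |b - ‖M - A‖| ≤ K * a / c ^ 2 := by
  refine ⟨100, by norm_num, ?_⟩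
  intro A B C M c a hncol hc hmin ha ha20 hMB hMC b hb hW
  obtain ⟨x, hx⟩ := hW
  simp only [Set.mem_setOf_eq] at hx
  obtain ⟨⟨hxA1, hxA2⟩, ⟨hxB1, hxB2⟩, ⟨hxC1, hxC2⟩⟩ := hx
  obtain ⟨hb1, hb2⟩ := hb
  have hc1 : c ≤ 1 := by
    have h2 := le_trans hmin (le_trans (min_le_right _ _) (min_le_right _ _)); linarith
  have hnu : 2 * c ≤ ‖B - A‖ := by
    have h2 := le_trans hmin (le_trans (min_le_left _ _) (min_le_left _ _))
    rwa [norm_sub_rev] at h2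
  have hnv : 2 * c ≤ ‖C - A‖ := by
    have h2 := le_trans hmin (le_trans (min_le_left _ _) (min_le_right _ _))
    rwa [norm_sub_rev] at h2
  have hnw : 2 * c ≤ ‖B - C‖ := le_trans hmin (le_trans (min_le_right _ _) (min_le_left _ _))
  have hvne : C - A ≠ 0 := by
    intro h0; rw [h0, norm_zero] at hnv; linarith
  have hG : ⟪B - A, C - A⟫ ^ 2 < ‖B - A‖ ^ 2 * ‖C - A‖ ^ 2 :=
    ann_strictCS A B C hncol hvne
  -- spanning
  have hli : LinearIndependent ℝ ![B - A, C - A] := by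
    rw [LinearIndependent.pair_iff]
    intro s' t' hst
    have h1 : ⟪s' • (B - A) + t' • (C - A), B - A⟫ = 0 := by rw [hst]; simp
    have h2 : ⟪s' • (B - A) + t' • (C - A), C - A⟫ = 0 := by rw [hst]; simp
    rw [inner_add_left, real_inner_smul_left, real_inner_smul_left,
      real_inner_self_eq_norm_sq, real_inner_comm (B - A) (C - A)] at h1
    rw [inner_add_left, real_inner_smul_left, real_inner_smul_left,
      real_inner_self_eq_norm_sq] at h2
    have hGne : ‖B - A‖ ^ 2 * ‖C - A‖ ^ 2 - ⟪B - A, C - A⟫ ^ 2 ≠ 0 := by nlinarith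
    constructor
    · have h3 : s' * (‖B - A‖ ^ 2 * ‖C - A‖ ^ 2 - ⟪B - A, C - A⟫ ^ 2) = 0 := by
        linear_combination (‖C - A‖ ^ 2) * h1 - ⟪B - A, C - A⟫ * h2
      exact (mul_eq_zero.mp h3).resolve_right hGne
    · have h3 : t' * (‖B - A‖ ^ 2 * ‖C - A‖ ^ 2 - ⟪B - A, C - A⟫ ^ 2) = 0 := by
        linear_combination (‖B - A‖ ^ 2) * h2 - ⟪B - A, C - A⟫ * h1
      exact (mul_eq_zero.mp h3).resolve_right hGne
  have hspan : ∀ z : EuclideanSpace ℝ (Fin 2),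
      ∃ cz dz : ℝ, cz • (B - A) + dz • (C - A) = z := by
    intro z
    have hr : Set.range ![B - A, C - A] = {B - A, C - A} := by
      ext y; simp [Fin.exists_fin_two, or_comm]
    have htop : Submodule.span ℝ ({B - A, C - A} : Set (EuclideanSpace ℝ (Fin 2))) = ⊤ := by
      rw [← hr]
      exact hli.span_eq_top_of_card_eq_finrank (by simp)
    have hz : z ∈ Submodule.span ℝ ({B - A, C - A} : Set (EuclideanSpace ℝ (Fin 2))) := by
      rw [htop]; trivial
    exact Submodule.mem_span_pair.mp hz
  obtain ⟨cw, dw, hws⟩ := hspan (x - M)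
  obtain ⟨cm, dm, hms⟩ := hspan (M - A)
  -- scalar identities
  have F1 : 2 * ⟪x - M, B - A⟫ = ‖x - A‖ ^ 2 - ‖x - B‖ ^ 2 := by
    have h1 := ann_inner_expand x M A B
    rw [hMB] at h1
    linarith
  have F2 : 2 * ⟪x - M, C - A⟫ = ‖x - A‖ ^ 2 - ‖x - C‖ ^ 2 := by
    have h1 := ann_inner_expand x M A C
    rw [hMC] at h1
    linarith
  have F3 : 2 * ⟪M - A, B - A⟫ = ‖B - A‖ ^ 2 := by
    have h1 := norm_sub_sq_real (M - A) (B - A)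
    have h2 : (M - A) - (B - A) = M - B := by abel
    rw [h2, ← hMB] at h1
    linarith
  have F4 : 2 * ⟪M - A, C - A⟫ = ‖C - A‖ ^ 2 := by
    have h1 := norm_sub_sq_real (M - A) (C - A)
    have h2 : (M - A) - (C - A) = M - C := by abel
    rw [h2, ← hMC] at h1
    linarith
  have F5 : ⟪x - M, B - A⟫ = cw * ‖B - A‖ ^ 2 + dw * ⟪B - A, C - A⟫ := by
    rw [← hws, inner_add_left, real_inner_smul_left, real_inner_smul_left,
      real_inner_self_eq_norm_sq, real_inner_comm (B - A) (C - A)]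
  have F6 : ⟪x - M, C - A⟫ = cw * ⟪B - A, C - A⟫ + dw * ‖C - A‖ ^ 2 := by
    rw [← hws, inner_add_left, real_inner_smul_left, real_inner_smul_left,
      real_inner_self_eq_norm_sq]
  have F7 : ‖x - M‖ ^ 2 = cw * ⟪x - M, B - A⟫ + dw * ⟪x - M, C - A⟫ := by
    rw [← real_inner_self_eq_norm_sq]
    nth_rewrite 1 [← hws]
    rw [inner_add_left, real_inner_smul_left, real_inner_smul_left,
      real_inner_comm (x - M) (B - A), real_inner_comm (x - M) (C - A)]
  have F8 : ⟪M - A, B - A⟫ = cm * ‖B - A‖ ^ 2 + dm * ⟪B - A, C - A⟫ := by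
    rw [← hms, inner_add_left, real_inner_smul_left, real_inner_smul_left,
      real_inner_self_eq_norm_sq, real_inner_comm (B - A) (C - A)]
  have F9 : ⟪M - A, C - A⟫ = cm * ⟪B - A, C - A⟫ + dm * ‖C - A‖ ^ 2 := by
    rw [← hms, inner_add_left, real_inner_smul_left, real_inner_smul_left,
      real_inner_self_eq_norm_sq]
  have F10 : ‖M - A‖ ^ 2 = cm * ⟪M - A, B - A⟫ + dm * ⟪M - A, C - A⟫ := by
    rw [← real_inner_self_eq_norm_sq]
    nth_rewrite 1 [← hms]
    rw [inner_add_left, real_inner_smul_left, real_inner_smul_left,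
      real_inner_comm (M - A) (B - A), real_inner_comm (M - A) (C - A)]
  have F11 : ‖B - C‖ ^ 2 = ‖B - A‖ ^ 2 - 2 * ⟪B - A, C - A⟫ + ‖C - A‖ ^ 2 := by
    have h1 := norm_sub_sq_real (B - A) (C - A)
    have h2 : (B - A) - (C - A) = B - C := by abel
    rw [h2] at h1; linarith
  have FS : |⟪B - A, C - A⟫| ≤ ‖B - A‖ * ‖C - A‖ := abs_real_inner_le_norm _ _
  have FW : |‖x - A‖ - ‖M - A‖| ≤ ‖x - M‖ := by
    have h1 := abs_norm_sub_norm_le (x - A) (M - A)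
    have h2 : (x - A) - (M - A) = x - M := by abel
    rwa [h2] at h1
  have FH : ‖M - A‖ ≤ ‖x - A‖ + ‖x - M‖ := by
    have h2 : M - A = (x - A) - (x - M) := by abel
    calc ‖M - A‖ = ‖(x - A) - (x - M)‖ := by rw [← h2]
    _ ≤ _ := norm_sub_le _ _
  clear hli hspan hws hms hncol hvne hG
  -- abstract all scalars
  set Nu : ℝ := ‖B - A‖ with hNu
  set Nv : ℝ := ‖C - A‖ with hNv
  set Nw : ℝ := ‖B - C‖ with hNw
  set H : ℝ := ‖M - A‖ with hH
  set W : ℝ := ‖x - M‖ with hWd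
  set RA : ℝ := ‖x - A‖ with hRA
  set RB : ℝ := ‖x - B‖ with hRB
  set RC : ℝ := ‖x - C‖ with hRC
  set S : ℝ := ⟪B - A, C - A⟫ with hS
  set IU : ℝ := ⟪x - M, B - A⟫ with hIU
  set IV : ℝ := ⟪x - M, C - A⟫ with hIV
  set JU : ℝ := ⟪M - A, B - A⟫ with hJU
  set JV : ℝ := ⟪M - A, C - A⟫ with hJV
  have hW0 : 0 ≤ W := by rw [hWd]; exact norm_nonneg _
  have hH0 : 0 ≤ H := by rw [hH]; exact norm_nonneg _
  have hRA0 : 0 ≤ RA := by rw [hRA]; exact norm_nonneg _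
  have hNu0 : 0 ≤ Nu := by rw [hNu]; exact norm_nonneg _
  have hNv0 : 0 ≤ Nv := by rw [hNv]; exact norm_nonneg _
  have hNuNv0 : 0 ≤ Nu * Nv := mul_nonneg hNu0 hNv0
  have hbpos : (0:ℝ) < b := by linarith
  have hba : 0 ≤ b - a := by
    have hcsq : c ^ 2 ≤ 1 := by
      rw [pow_two]; exact mul_le_one₀ hc1 (le_of_lt hc) hc1
    linarith
  have heps0 : 0 < 2 * a * b := mul_pos (by linarith) hbpos
  -- bounds on the two inner products
  have hIUb : |IU| ≤ 2 * a * b := ann_num0 a b IU RA RB ha hba F1 hxA1 hxA2 hxB1 hxB2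
  have hIVb : |IV| ≤ 2 * a * b := ann_num0 a b IV RA RC ha hba F2 hxA1 hxA2 hxC1 hxC2
  -- circumradius identity
  have em1 : cm * Nu ^ 2 + dm * S = Nu ^ 2 / 2 := by linear_combination (1/2) * F3 - F8
  have em2 : cm * S + dm * Nv ^ 2 = Nv ^ 2 / 2 := by linear_combination (1/2) * F4 - F9
  have em3 : H ^ 2 = cm * (Nu ^ 2 / 2) + dm * (Nv ^ 2 / 2) := by
    linear_combination F10 + (cm / 2) * F3 + (dm / 2) * F4
  have I1 : 4 * H ^ 2 * (Nu ^ 2 * Nv ^ 2 - S ^ 2)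
      = Nu ^ 2 * Nv ^ 2 * (Nu ^ 2 + Nv ^ 2 - 2 * S) := by
    linear_combination (2 * Nu ^ 2 * Nv ^ 2 - 2 * Nv ^ 2 * S) * em1
      + (2 * Nu ^ 2 * Nv ^ 2 - 2 * Nu ^ 2 * S) * em2
      + (4 * (Nu ^ 2 * Nv ^ 2 - S ^ 2)) * em3
  have I1' : 4 * H ^ 2 * (Nu ^ 2 * Nv ^ 2 - S ^ 2) = (Nu * Nv * Nw) ^ 2 := by
    linear_combination I1 - Nu ^ 2 * Nv ^ 2 * F11
  -- Cramer identity for w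
  have I2 : W ^ 2 * (Nu ^ 2 * Nv ^ 2 - S ^ 2)
      = Nv ^ 2 * IU ^ 2 - 2 * S * IU * IV + Nu ^ 2 * IV ^ 2 := by
    linear_combination (Nu ^ 2 * Nv ^ 2 - S ^ 2) * F7 - (IU * Nv ^ 2 - IV * S) * F5
      - (IV * Nu ^ 2 - IU * S) * F6
  have I3 : W ^ 2 * (Nu ^ 2 * Nv ^ 2 - S ^ 2) ≤ (2 * a * b) ^ 2 * (Nu + Nv) ^ 2 :=
    ann_num1 (2 * a * b) Nu Nv S IU IV W (le_of_lt heps0) hNuNv0 hIUb hIVb FS I2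
  have I6 : W * c ^ 2 ≤ (2 * a * b) * H :=
    ann_num2 c (2 * a * b) Nu Nv Nw H W (Nu ^ 2 * Nv ^ 2 - S ^ 2) hc (le_of_lt heps0)
      hW0 hH0 hnu hnv hnw I1' I3
  exact ann_num3 a b c H W RA hc hc1 ha ha20 hb1 hb2 hW0 hH0 I6 hxA1 hxA2 FW FH
end

section
/- For every n ∈ ℕ there exists a constant C = C(n) ≥ 1 with the following property. Let δ > 0, q > 0, and let Q ⊆ ℝⁿ be any set with s-dimensional Hausdorff content H^q_∞(Q) = β > 0. Then there exists a finite δ-separated set P ⊆ Q such that #(P ∩ B(x,r)) ≤ C·(r/δ)^q for all x ∈ ℝⁿ and all r > δ, and #P ≥ C⁻¹·β·δ^{−q}. -/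
/-!
Among the finite `(δ,q)`-subsets of `Q` with constant `1`, either one already has at least
`β δ^{-q}` points, or there is one, `P`, of maximal cardinality. By maximality every `z ∈ Q` is
either `δ`-close to `P` or would break the counting bound on some ball `B(x,r)`, `r > δ`; in both
cases a ball of radius `r ≥ δ` around `z` already contains `≳ (r/δ)^q` points of `P`. Vitali's
covering lemma extracts disjoint such balls whose fourfold enlargements cover `Q`, so
`β ≤ ∑ (8r)^q ≲ 8^q δ^q #P`. Finally `q ≤ n`, because `H^q_∞` vanishes on `ℝⁿ` for `q > n`,
so `8^q ≤ 8^n` and the constant depends on `n` only.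
-/

open scoped ENNReal
open MeasureTheory Metric Set

/-- The `d`-dimensional Hausdorff content of a set:
`H^d_∞(A) = inf { ∑ᵢ (diam Uᵢ)^d : A ⊆ ⋃ᵢ Uᵢ }`. -/
noncomputable def hausdorffContent {X : Type*} [PseudoEMetricSpace X] (d : ℝ) (A : Set X) :
    ℝ≥0∞ :=
  ⨅ (U : ℕ → Set X) (_ : A ⊆ ⋃ i, U i), ∑' i, EMetric.diam (U i) ^ d

variable {X : Type*}

theorem hausdorffContent_le_tsum [PseudoEMetricSpace X] {ι : Type*} [Countable ι] {d : ℝ}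
    (hd : 0 < d) {A : Set X} (U : ι → Set X) (hA : A ⊆ ⋃ i, U i) :
    hausdorffContent d A ≤ ∑' i, ediam (U i) ^ d := by
  obtain ⟨e, he⟩ := Countable.exists_injective_nat ι
  -- padding with empty sets costs nothing only because `0 ^ d = 0` for `d > 0`
  set V : ℕ → Set X := Function.extend e U (fun _ => ∅)
  have hcover : A ⊆ ⋃ k, V k :=
    hA.trans <| iUnion_subset fun i => (he.extend_apply U _ i).symm ▸ subset_iUnion V (e i)
  have hV : (fun k => ediam (V k) ^ d) = Function.extend e (fun i => ediam (U i) ^ d) 0 := by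
    funext k
    rw [Function.apply_extend (fun s => ediam s ^ d)]
    simp only [Function.comp_def, ediam_empty, ENNReal.zero_rpow_of_pos hd]
    rfl
  calc hausdorffContent d A ≤ ∑' k, ediam (V k) ^ d := iInf₂_le V hcover
    _ = ∑' i, ediam (U i) ^ d := by rw [hV, tsum_extend_zero he]

theorem hausdorffContent_le_hausdorffMeasure [EMetricSpace X] [MeasurableSpace X]
    [BorelSpace X] {d : ℝ} (hd : 0 < d) (A : Set X) :
    hausdorffContent d A ≤ μH[d] A := by
  rw [Measure.hausdorffMeasure_apply]
  refine le_iSup₂_of_le 1 one_pos <| le_iInf₂ fun U hU => le_iInf fun _ => ?_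
  refine (hausdorffContent_le_tsum hd U hU).trans_eq (tsum_congr fun k => ?_)
  rcases (U k).eq_empty_or_nonempty with h | h
  · simp [h, ENNReal.zero_rpow_of_pos hd]
  · rw [iSup_pos h]

theorem le_finrank_of_hausdorffContent_pos {E : Type*} [NormedAddCommGroup E]
    [NormedSpace ℝ E] [FiniteDimensional ℝ E] {d : ℝ} (hd : 0 < d) {A : Set E}
    (hA : 0 < hausdorffContent d A) : d ≤ Module.finrank ℝ E := by
  borelize E
  by_contra! hlt
  have hdim : dimH A < d.toNNReal := by
    refine (dimH_mono (subset_univ A)).trans_lt ?_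
    rw [Real.dimH_univ_eq_finrank, ← ENNReal.coe_natCast, ENNReal.coe_lt_coe,
      ← NNReal.coe_lt_coe, Real.coe_toNNReal d hd.le]
    exact_mod_cast hlt
  have hzero := hausdorffMeasure_of_dimH_lt hdim
  rw [Real.coe_toNNReal d hd.le] at hzero
  exact hA.not_ge ((hausdorffContent_le_hausdorffMeasure hd A).trans hzero.le)

theorem Set.Finite.ofReal_ncard {α : Type*} {s : Set α} (hs : s.Finite) :
    ENNReal.ofReal s.ncard = s.encard := by
  rw [ENNReal.ofReal_natCast, ← hs.cast_ncard_eq, ENat.toENNReal_coe]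

theorem tsum_encard_eq_encard_biUnion {ι α : Type*} {s : Set ι} (hs : s.Countable)
    {S : ι → Set α} (hS : s.PairwiseDisjoint S) :
    ∑' i : s, ((S i).encard : ℝ≥0∞) = (⋃ i ∈ s, S i).encard := by
  -- countable additivity of the counting measure for the discrete σ-algebra
  let : MeasurableSpace α := ⊤
  simp only [← Measure.count_apply (MeasurableSpace.measurableSet_top)]
  exact (measure_biUnion hs hS fun _ _ => MeasurableSpace.measurableSet_top).symm

theorem ediam_closedBall_rpow_le [PseudoMetricSpace X] (x : X) {r d : ℝ}
    (hr : 0 ≤ r) (hd : 0 ≤ d) : ediam (closedBall x r) ^ d ≤ ENNReal.ofReal ((2 * r) ^ d) := by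
  rw [← ENNReal.ofReal_rpow_of_nonneg (by positivity) hd]
  gcongr
  refine ediam_le_of_forall_dist_le fun p hp p' hp' => (dist_triangle_right p p' x).trans ?_
  linarith [mem_closedBall.1 hp, mem_closedBall.1 hp']

theorem ediam_closedBall_four_mul_rpow_le [PseudoMetricSpace X] (x : X) {r d K : ℝ}
    {S : Set X} (hS : S.Finite) (hr : 0 ≤ r) (hd : 0 ≤ d) (hrK : r ^ d ≤ K * S.ncard) :
    ediam (closedBall x (4 * r)) ^ d ≤ ENNReal.ofReal (8 ^ d * K) * S.encard :=
  calc _ ≤ ENNReal.ofReal ((2 * (4 * r)) ^ d) := ediam_closedBall_rpow_le _ (by positivity) hd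
    _ = ENNReal.ofReal (8 ^ d * r ^ d) := by
        rw [← mul_assoc, Real.mul_rpow (by norm_num) hr]; norm_num
    _ ≤ ENNReal.ofReal (8 ^ d * K * S.ncard) := by rw [mul_assoc]; gcongr
    _ = _ := by rw [ENNReal.ofReal_mul' (Nat.cast_nonneg _), hS.ofReal_ncard]

theorem hausdorffContent_le_of_forall_mem_closedBall [PseudoMetricSpace X]
    {P A : Set X} (hP : P.Finite) {d K : ℝ} (hd : 0 < d)
    (hA : ∀ z ∈ A, ∃ x r, 0 < r ∧ z ∈ closedBall x r ∧
      r ^ d ≤ K * (P ∩ closedBall x r).ncard) :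
    hausdorffContent d A ≤ ENNReal.ofReal (8 ^ d * K * P.ncard) := by
  choose! x r hr hzr hrK using hA
  set S : X → Set X := fun z => P ∩ closedBall (x z) (r z)
  have hS_fin (z : X) : (S z).Finite := hP.subset inter_subset_left
  have hS_pos : ∀ z ∈ A, 0 < K * (S z).ncard := fun z hz =>
    (Real.rpow_pos_of_pos (hr z hz) d).trans_le (hrK z hz)
  have hR : ∀ z ∈ A, r z ≤ (K * P.ncard) ^ d⁻¹ := by
    intro z hz
    have hK : 0 < K := pos_of_mul_pos_left (hS_pos z hz) (Nat.cast_nonneg _)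
    rw [Real.le_rpow_inv_iff_of_pos (hr z hz).le (by positivity) hd]
    exact (hrK z hz).trans <| mul_le_mul_of_nonneg_left
      (by exact_mod_cast ncard_le_ncard inter_subset_left hP) hK.le
  obtain ⟨u, huA, hdisj, hcov⟩ :=
    Vitali.exists_disjoint_subfamily_covering_enlargement_closedBall A x r _ hR 4 (by norm_num)
  have hS_disj : u.PairwiseDisjoint S := hdisj.mono fun z => inter_subset_right
  have hS_sub : (⋃ z ∈ u, S z) ⊆ P := iUnion₂_subset fun z _ => inter_subset_left
  have hu : u.Countable := by
    -- the sets `S z`, `z ∈ u`, are disjoint nonempty subsets of the finite set `P`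
    refine Set.Finite.countable <| (hS_disj.finite_biUnion_iff.1 (hP.subset hS_sub)).2.subset
      fun z hz => ⟨hz, nonempty_of_ncard_ne_zero fun h0 => by simpa [h0] using hS_pos z (huA hz)⟩
  have : Countable u := hu.to_subtype
  have hA_cover : A ⊆ ⋃ b : u, closedBall (x b) (4 * r b) := fun z hz => by
    obtain ⟨b, hb, hsub⟩ := hcov z hz
    exact mem_iUnion.2 ⟨⟨b, hb⟩, hsub (hzr z hz)⟩
  calc hausdorffContent d A ≤ ∑' b : u, ediam (closedBall (x b) (4 * r b)) ^ d :=
        hausdorffContent_le_tsum hd _ hA_cover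
    _ ≤ ∑' b : u, ENNReal.ofReal (8 ^ d * K) * (S b).encard :=
        ENNReal.tsum_le_tsum fun b => ediam_closedBall_four_mul_rpow_le _ (hS_fin b)
          (hr b (huA b.2)).le hd.le (hrK b (huA b.2))
    _ = ENNReal.ofReal (8 ^ d * K) * (⋃ b ∈ u, S b).encard := by
        rw [ENNReal.tsum_mul_left, tsum_encard_eq_encard_biUnion hu hS_disj]
    _ ≤ ENNReal.ofReal (8 ^ d * K) * P.encard := by gcongr
    _ = _ := by rw [ENNReal.ofReal_mul' (Nat.cast_nonneg _), hP.ofReal_ncard]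

theorem exists_le_ncard_or_forall_insert_mem {α : Type*} {p : Set α → Prop}
    (hfin : ∀ s, p s → s.Finite) (h0 : p ∅) (M : ℕ) :
    ∃ s, p s ∧ (M ≤ s.ncard ∨ ∀ z, p (insert z s) → z ∈ s) := by
  by_cases! hM : ∃ s, p s ∧ M ≤ s.ncard
  · obtain ⟨s, hs, hMs⟩ := hM
    exact ⟨s, hs, Or.inl hMs⟩
  have hbdd : BddAbove (ncard '' {s | p s}) := by
    refine ⟨M, ?_⟩
    rintro _ ⟨s, hs, rfl⟩
    exact (hM s hs).le
  obtain ⟨s, hs, hs_max⟩ := Nat.sSup_mem (s := ncard '' {s | p s}) ⟨0, ∅, h0, ncard_empty α⟩ hbdd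
  refine ⟨s, hs, Or.inr fun z hz => by_contra fun hzs => ?_⟩
  have := le_csSup hbdd ⟨_, hz, rfl⟩
  rw [← hs_max, ncard_insert_of_notMem hzs (hfin s hs)] at this
  omega

section DeltaQSet

variable [PseudoMetricSpace X] {δ q C : ℝ} {P : Set X}

def IsDeltaQSet (δ q C : ℝ) (P : Set X) : Prop :=
  P.Finite ∧ P.Pairwise (fun x y => δ ≤ dist x y) ∧
    ∀ x r, δ < r → ((P ∩ ball x r).ncard : ℝ) ≤ C * (r / δ) ^ q

theorem isDeltaQSet_empty (hδ : 0 ≤ δ) (hC : 0 ≤ C) : IsDeltaQSet δ q C (∅ : Set X) :=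
  ⟨finite_empty, pairwise_empty _, fun x r hr => by
    simpa using mul_nonneg hC (Real.rpow_nonneg (div_nonneg (hδ.trans hr.le) hδ) q)⟩

theorem IsDeltaQSet.mono {C' : ℝ} (hP : IsDeltaQSet δ q C P) (hδ : 0 ≤ δ) (hC : C ≤ C') :
    IsDeltaQSet δ q C' P :=
  ⟨hP.1, hP.2.1, fun x r hr => (hP.2.2 x r hr).trans <|
    mul_le_mul_of_nonneg_right hC (Real.rpow_nonneg (div_nonneg (hδ.trans hr.le) hδ) q)⟩

theorem IsDeltaQSet.mem_ball_and_rpow_le_of_insert {x z : X} {r : ℝ}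
    (hP : IsDeltaQSet δ q 1 P) (hδ : 0 < δ) (hq : 0 ≤ q) (hr : δ < r)
    (hcount : (r / δ) ^ q < ((insert z P ∩ ball x r).ncard : ℝ)) :
    z ∈ ball x r ∧ (r / δ) ^ q ≤ 2 * (P ∩ ball x r).ncard := by
  have hz : z ∈ ball x r := by
    by_contra hz
    rw [insert_inter_of_notMem hz] at hcount
    exact (hP.2.2 x r hr).not_gt (by simpa using hcount)
  have hm : ((insert z P ∩ ball x r).ncard : ℝ) ≤ (P ∩ ball x r).ncard + 1 := by
    rw [insert_inter_of_mem hz]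
    exact_mod_cast ncard_insert_le z _
  have hone : 1 ≤ (r / δ) ^ q := Real.one_le_rpow ((one_le_div hδ).2 hr.le) hq
  have hm_pos : (1 : ℝ) ≤ (P ∩ ball x r).ncard := by
    rw [Nat.one_le_cast, Nat.one_le_iff_ne_zero]
    intro h0
    rw [h0, Nat.cast_zero] at hm
    linarith
  exact ⟨hz, by linarith⟩

theorem IsDeltaQSet.exists_closedBall_of_maximal {z : X} (hP : IsDeltaQSet δ q 1 P)
    (hδ : 0 < δ) (hq : 0 ≤ q) (hmax : IsDeltaQSet δ q 1 (insert z P) → z ∈ P) :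
    ∃ x r, 0 < r ∧ z ∈ closedBall x r ∧ r ^ q ≤ 2 * δ ^ q * (P ∩ closedBall x r).ncard := by
  have hδq := Real.rpow_pos_of_pos hδ q
  by_cases! hnear : ∃ p ∈ P, dist z p < δ
  · obtain ⟨p, hp, hzp⟩ := hnear
    have : (1 : ℝ) ≤ (P ∩ closedBall p δ).ncard := by
      exact_mod_cast (ncard_pos (hP.1.subset inter_subset_left)).2
        ⟨p, hp, mem_closedBall_self hδ.le⟩
    exact ⟨p, δ, hδ, hzp.le, by nlinarith⟩
  have hzP : z ∉ P := fun hz => (hnear z hz).not_gt (by simpa using hδ)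
  have hsep : (insert z P).Pairwise (fun x y => δ ≤ dist x y) :=
    hP.2.1.insert fun p hp _ => ⟨hnear p hp, dist_comm z p ▸ hnear p hp⟩
  obtain ⟨x, r, hr, hcount⟩ :
      ∃ x r, δ < r ∧ 1 * (r / δ) ^ q < ((insert z P ∩ ball x r).ncard : ℝ) := by
    by_contra! h
    exact hzP (hmax ⟨hP.1.insert z, hsep, h⟩)
  obtain ⟨hz, hbound⟩ := hP.mem_ball_and_rpow_le_of_insert hδ hq hr (by simpa using hcount)
  have hclosed : ((P ∩ ball x r).ncard : ℝ) ≤ (P ∩ closedBall x r).ncard := by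
    exact_mod_cast ncard_le_ncard (inter_subset_inter_right P ball_subset_closedBall)
      (hP.1.subset inter_subset_left)
  refine ⟨x, r, hδ.trans hr, ball_subset_closedBall hz, ?_⟩
  calc r ^ q = δ ^ q * (r / δ) ^ q := by
        rw [Real.div_rpow (hδ.trans hr).le hδ.le, mul_div_cancel₀ _ hδq.ne']
    _ ≤ 2 * δ ^ q * (P ∩ closedBall x r).ncard := by nlinarith

theorem IsDeltaQSet.hausdorffContent_le_of_maximal {A : Set X} (hP : IsDeltaQSet δ q 1 P)
    (hδ : 0 < δ) (hq : 0 < q) (hmax : ∀ z ∈ A, IsDeltaQSet δ q 1 (insert z P) → z ∈ P) :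
    hausdorffContent q A ≤ ENNReal.ofReal (2 * 8 ^ q * δ ^ q * P.ncard) := by
  convert hausdorffContent_le_of_forall_mem_closedBall hP.1 hq fun z hz =>
    hP.exists_closedBall_of_maximal hδ hq.le (hmax z hz) using 2
  ring

theorem exists_isDeltaQSet_subset {Q : Set X} (hδ : 0 < δ) (hq : 0 < q) {β : ℝ}
    (hβ : ENNReal.ofReal β ≤ hausdorffContent q Q) :
    ∃ P ⊆ Q, IsDeltaQSet δ q 1 P ∧ β * δ ^ (-q) ≤ 2 * 8 ^ q * P.ncard := by
  obtain ⟨P, ⟨hPQ, hP⟩, hlarge | hmax⟩ := exists_le_ncard_or_forall_insert_mem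
    (p := fun P => P ⊆ Q ∧ IsDeltaQSet δ q 1 P) (fun _ h => h.2.1)
    ⟨empty_subset Q, isDeltaQSet_empty hδ.le zero_le_one⟩ ⌈β * δ ^ (-q)⌉₊
  · refine ⟨P, hPQ, hP, (Nat.ceil_le.1 hlarge).trans (le_mul_of_one_le_left (by positivity) ?_)⟩
    linarith [Real.one_le_rpow (show (1 : ℝ) ≤ 8 by norm_num) hq.le]
  have hcontent := hβ.trans <| hP.hausdorffContent_le_of_maximal hδ hq fun z hz h =>
    hmax z ⟨insert_subset hz hPQ, h⟩
  rw [ENNReal.ofReal_le_ofReal_iff (by positivity)] at hcontent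
  refine ⟨P, hPQ, hP, ?_⟩
  calc β * δ ^ (-q) ≤ 2 * 8 ^ q * δ ^ q * P.ncard * δ ^ (-q) := by gcongr
    _ = 2 * 8 ^ q * P.ncard := by
        rw [Real.rpow_neg hδ.le]
        field_simp [(Real.rpow_pos_of_pos hδ q).ne']

end DeltaQSet

/-- **Existence of `(δ,q)`-subsets (Lemma 2.3).** For every `n` there is a constant
`C = C(n) ≥ 1` such that: for all `δ, q > 0` and every set `Q ⊆ ℝⁿ` with
`H^q_∞(Q) = β > 0`, there is a finite `δ`-separated set `P ⊆ Q` with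
`#(P ∩ B(x,r)) ≤ C·(r/δ)^q` for all `x` and `r > δ`, and `#P ≥ C⁻¹·β·δ^{−q}`. -/
theorem exists_delta_q_subset (n : ℕ) :
    ∃ C : ℝ, 1 ≤ C ∧
      ∀ (δ q β : ℝ), 0 < δ → 0 < q → 0 < β →
        ∀ Q : Set (EuclideanSpace ℝ (Fin n)),
          hausdorffContent q Q = ENNReal.ofReal β →
          ∃ P : Set (EuclideanSpace ℝ (Fin n)), P ⊆ Q ∧ P.Finite ∧
            (∀ x ∈ P, ∀ y ∈ P, x ≠ y → δ ≤ dist x y) ∧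
            (∀ (x : EuclideanSpace ℝ (Fin n)) (r : ℝ), δ < r →
              ((P ∩ Metric.ball x r).ncard : ℝ) ≤ C * (r / δ) ^ q) ∧
            C⁻¹ * β * δ ^ (-q) ≤ (P.ncard : ℝ) := by
  have h8n : (1 : ℝ) ≤ 8 ^ n := one_le_pow₀ (by norm_num)
  refine ⟨2 * 8 ^ n, by linarith, fun δ q β hδ hq hβ Q hQ => ?_⟩
  have hqn : q ≤ n := by
    have hpos : 0 < hausdorffContent q Q := hQ ▸ ENNReal.ofReal_pos.2 hβ
    simpa using le_finrank_of_hausdorffContent_pos hq hpos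
  have hC : 2 * 8 ^ q ≤ 2 * (8 : ℝ) ^ n := by
    rw [← Real.rpow_natCast]
    gcongr
    norm_num
  obtain ⟨P, hPQ, hP, hcard⟩ := exists_isDeltaQSet_subset hδ hq hQ.ge
  obtain ⟨hP_fin, hP_sep, hP_count⟩ := hP.mono hδ.le (show (1 : ℝ) ≤ 2 * 8 ^ n by linarith)
  refine ⟨P, hPQ, hP_fin, fun x hx y hy hxy => hP_sep hx hy hxy, hP_count, ?_⟩
  rw [mul_assoc, inv_mul_le_iff₀ (by positivity)]
  exact hcard.trans (by gcongr)
end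

section
/- Let 0 < s ≤ 1, let x ∈ ℝ² and r ∈ [1/2, 2], and let E ⊆ ℝ². Set η := H^s_∞(S(x,r) ∩ E) and γ := (η/16)^{1/s}, and assume 0 < η and γ ≤ 1/16. Then there exist three arcs h⁺, h⁻, h^× of the circle S(x,r) that are pairwise separated, namely dist(h, h') ≥ π^{−1}γ for any two distinct arcs h, h' among them, such that (1/8)·η ≤ H^s_∞(h ∩ E) ≤ (3/16)·η for each h ∈ {h⁺, h⁻, h^×}. -/
/-!
Parametrize the circle as `θ ↦ Φ (r e^{iθ})` on `[0, 2π]`, with `Φ : ℂ ≃ᵢ ℝ²` an isometry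
sending `0` to `x`. The arc over `[u, v]` has diameter at most `r (v - u)`, so its content in `E`
is at most `(r (v - u))^s`: the content of the arc over `[a, t]` is continuous in `t`, and a gap
of angle `γ / r` carries content at most `γ^s = η / 16`. Going around the circle, the intermediate
value theorem cuts off an arc of content exactly `3η/16`, then a gap is skipped, three times. By
subadditivity each arc with its gap uses at most `η / 4`, and since `3 · η/4 < η` there is always
content left for the next arc, and the last gap still ends before `2π`. Points of different arcs
therefore differ in angle by between `γ / r` and `2π - γ / r`, and Jordan's inequality bounds
their distance below by `2γ / π`.
-/

open scoped ENNReal Real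
open MeasureTheory Metric Set

open Filter Topology

section HausdorffContent

variable {X : Type*} [PseudoEMetricSpace X] {d : ℝ}

theorem hausdorffContent_inter_eq_restrict_ofFunction (hd : 0 < d) (A E : Set X) :
    hausdorffContent d (A ∩ E) = OuterMeasure.restrict E
      (OuterMeasure.ofFunction (fun B : Set X => ediam B ^ d) (by simp [hd])) A := by
  rw [OuterMeasure.restrict_apply]
  rfl

theorem hausdorffContent_inter_le_ediam_rpow (hd : 0 < d) (A E : Set X) :
    hausdorffContent d (A ∩ E) ≤ ediam A ^ d :=
  (OuterMeasure.ofFunction_le (m := fun B : Set X => ediam B ^ d) (m_empty := by simp [hd])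
    (A ∩ E)).trans (ENNReal.rpow_le_rpow (ediam_mono inter_subset_left) hd.le)

end HausdorffContent

section ArcMeasure

variable {X : Type*} (ν : OuterMeasure X) (p : ℝ → X) {ω : ℝ → ℝ}

theorem measure_image_Icc_le_add (a u v : ℝ) :
    ν (p '' Icc a v) ≤ ν (p '' Icc a u) + ν (p '' Icc u v) :=
  (measure_mono (image_union p _ _ ▸ image_mono Icc_subset_Icc_union_Icc)).trans
    (measure_union_le _ _)

theorem measure_image_Icc_le_add_modulus
    (hmod : ∀ u v, u ≤ v → ν (p '' Icc u v) ≤ ENNReal.ofReal (ω (v - u))) (a t t' : ℝ) :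
    ν (p '' Icc a t) ≤ ν (p '' Icc a t') + ENNReal.ofReal (ω |t - t'|) := by
  rcases le_total t t' with h | h
  · exact (measure_mono (image_mono (Icc_subset_Icc_right h))).trans le_self_add
  · rw [abs_of_nonneg (sub_nonneg.2 h)]
    exact (measure_image_Icc_le_add ν p a t' t).trans (add_le_add le_rfl (hmod t' t h))

theorem measure_image_Icc_self (hω : Tendsto ω (𝓝 0) (𝓝 0))
    (hmod : ∀ u v, u ≤ v → ν (p '' Icc u v) ≤ ENNReal.ofReal (ω (v - u))) (a : ℝ) :
    ν (p '' Icc a a) = 0 := by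
  have hω0 : ω 0 = 0 :=
    tendsto_nhds_unique (tendsto_pure_nhds ω 0) (hω.mono_left (pure_le_nhds 0))
  simpa [hω0] using hmod a a le_rfl

theorem continuous_measure_image_Icc (hω : Tendsto ω (𝓝 0) (𝓝 0))
    (hmod : ∀ u v, u ≤ v → ν (p '' Icc u v) ≤ ENNReal.ofReal (ω (v - u))) (a : ℝ) :
    Continuous fun t => ν (p '' Icc a t) := by
  refine continuous_iff_continuousAt.2 fun t₀ => ?_
  have hfin : ν (p '' Icc a t₀) ≠ ∞ := by
    refine ne_top_of_le_ne_top ?_ (measure_image_Icc_le_add_modulus ν p hmod a t₀ a)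
    rw [measure_image_Icc_self ν p hω hmod a, zero_add]
    exact ENNReal.ofReal_ne_top
  have hsmall : Tendsto (fun t => ENNReal.ofReal (ω |t - t₀|)) (𝓝 t₀) (𝓝 0) := by
    have hdist : Tendsto (fun t => |t - t₀|) (𝓝 t₀) (𝓝 0) :=
      (continuous_abs.comp (continuous_sub_right t₀)).tendsto' t₀ 0 (by simp)
    simpa using ENNReal.tendsto_ofReal (hω.comp hdist)
  refine (ENNReal.tendsto_nhds hfin).2 fun ε hε => ?_
  filter_upwards [ENNReal.tendsto_nhds_zero.1 hsmall ε hε] with t ht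
  refine ⟨tsub_le_iff_right.2 ?_, ?_⟩
  · refine (measure_image_Icc_le_add_modulus ν p hmod a t₀ t).trans ?_
    rw [abs_sub_comm]
    gcongr
  · exact (measure_image_Icc_le_add_modulus ν p hmod a t t₀).trans (by gcongr)

theorem exists_arc_measure_eq {α : ℝ} (hα : 0 ≤ α) {g T m : ℝ≥0∞}
    (hω : Tendsto ω (𝓝 0) (𝓝 0))
    (hmod : ∀ u v, u ≤ v → ν (p '' Icc u v) ≤ ENNReal.ofReal (ω (v - u)))
    (hgap : ∀ u v, u ≤ v → v ≤ u + α → ν (p '' Icc u v) ≤ g)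
    {l a L : ℝ} (haL : a ≤ L) (hm : ν (p '' Icc l a) ≤ m)
    (htot : m + (T + g) < ν (p '' Icc l L)) :
    ∃ t, a ≤ t ∧ t + α ≤ L ∧ ν (p '' Icc a t) = T ∧
      ν (p '' Icc l (t + α)) ≤ m + (T + g) := by
  have hrest : T ≤ ν (p '' Icc a L) := by
    by_contra! h
    refine htot.not_ge ((measure_image_Icc_le_add ν p l a L).trans ?_)
    exact add_le_add hm (h.le.trans le_self_add)
  obtain ⟨t, ⟨hat, htL⟩, hT⟩ :=
    intermediate_value_Icc haL (continuous_measure_image_Icc ν p hω hmod a).continuousOn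
      ⟨(measure_image_Icc_self ν p hω hmod a).trans_le zero_le, hrest⟩
  have hprefix : ν (p '' Icc l t) ≤ m + T :=
    hT ▸ (measure_image_Icc_le_add ν p l a t).trans (add_le_add hm le_rfl)
  have hroom : t + α ≤ L := by
    by_contra! h
    refine htot.not_ge ((measure_image_Icc_le_add ν p l t L).trans ?_)
    exact (add_le_add hprefix (hgap t L htL h.le)).trans_eq (add_assoc _ _ _)
  refine ⟨t, hat, hroom, hT, (measure_image_Icc_le_add ν p l t (t + α)).trans ?_⟩
  exact (add_le_add hprefix (hgap t (t + α) (by linarith) le_rfl)).trans_eq (add_assoc _ _ _)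

theorem exists_three_arcs_measure_eq {α : ℝ} (hα : 0 ≤ α) {g T : ℝ≥0∞}
    (hω : Tendsto ω (𝓝 0) (𝓝 0))
    (hmod : ∀ u v, u ≤ v → ν (p '' Icc u v) ≤ ENNReal.ofReal (ω (v - u)))
    (hgap : ∀ u v, u ≤ v → v ≤ u + α → ν (p '' Icc u v) ≤ g)
    {l L : ℝ} (hlL : l ≤ L) (htot : 3 * (T + g) < ν (p '' Icc l L)) :
    ∃ t₁ t₂ t₃, l ≤ t₁ ∧ t₁ + α ≤ t₂ ∧ t₂ + α ≤ t₃ ∧ t₃ + α ≤ L ∧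
      ν (p '' Icc l t₁) = T ∧ ν (p '' Icc (t₁ + α) t₂) = T ∧
      ν (p '' Icc (t₂ + α) t₃) = T := by
  rw [show 3 * (T + g) = 0 + (T + g) + (T + g) + (T + g) by ring] at htot
  obtain ⟨t₁, hl₁, h₁L, h₁, hm₁⟩ := exists_arc_measure_eq ν p hα hω hmod hgap hlL
    (measure_image_Icc_self ν p hω hmod l).le ((le_self_add.trans le_self_add).trans_lt htot)
  obtain ⟨t₂, h₁₂, h₂L, h₂, hm₂⟩ :=
    exists_arc_measure_eq ν p hα hω hmod hgap h₁L hm₁ (le_self_add.trans_lt htot)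
  obtain ⟨t₃, h₂₃, h₃L, h₃, -⟩ := exists_arc_measure_eq ν p hα hω hmod hgap h₂L hm₂ htot
  exact ⟨t₁, t₂, t₃, hl₁, h₁₂, h₂₃, h₃L, h₁, h₂, h₃⟩

end ArcMeasure

section Circle

theorem dist_circleMap_circleMap (c : ℂ) (R a b : ℝ) :
    dist (circleMap c R a) (circleMap c R b) = 2 * |R| * |Real.sin ((a - b) / 2)| := by
  have h : circleMap c R a - circleMap c R b =
      R * Complex.exp (b * Complex.I) * (Complex.exp (Complex.I * ↑(a - b)) - 1) := by
    simp only [circleMap, mul_sub, mul_assoc, ← Complex.exp_add]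
    push_cast
    ring_nf
  rw [dist_eq_norm, h, norm_mul, norm_mul, Complex.norm_exp_I_mul_ofReal_sub_one,
    Complex.norm_exp_ofReal_mul_I, Complex.norm_real, Real.norm_eq_abs, Real.norm_eq_abs,
    abs_mul, abs_two]
  ring

theorem div_pi_le_sin_half {α θ : ℝ} (hα : 0 ≤ α) (h₁ : α ≤ θ) (h₂ : θ ≤ 2 * π - α) :
    α / π ≤ Real.sin (θ / 2) := by
  have hπ := Real.pi_pos
  rcases le_total (θ / 2) (π / 2) with h | h
  · calc α / π ≤ 2 / π * (θ / 2) := by rw [show 2 / π * (θ / 2) = θ / π by ring]; gcongr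
      _ ≤ Real.sin (θ / 2) := Real.mul_le_sin (by linarith) h
  · calc α / π ≤ 2 / π * (π - θ / 2) := by
          rw [show 2 / π * (π - θ / 2) = (2 * π - θ) / π by field_simp]; gcongr; linarith
      _ ≤ Real.sin (π - θ / 2) := Real.mul_le_sin (by linarith) (by linarith)
      _ = Real.sin (θ / 2) := Real.sin_pi_sub _

theorem le_dist_circleMap (c : ℂ) (R : ℝ) {α a b : ℝ} (hα : 0 ≤ α) (h₁ : α ≤ b - a)
    (h₂ : b - a ≤ 2 * π - α) :
    2 * |R| * (α / π) ≤ dist (circleMap c R a) (circleMap c R b) := by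
  rw [dist_comm, dist_circleMap_circleMap]
  gcongr
  exact (div_pi_le_sin_half hα h₁ h₂).trans (le_abs_self _)

variable {X : Type*} [PseudoMetricSpace X] (Φ : ℂ ≃ᵢ X) {r : ℝ}

theorem IsometryEquiv.sphere_subset_image_circleMap (hr : 0 ≤ r) :
    sphere (Φ 0) r ⊆ Φ ∘ circleMap 0 r '' Icc 0 (2 * π) := by
  have h := image_circleMap_Ioc 0 r
  rw [abs_of_nonneg hr] at h
  rw [← Φ.image_sphere, image_comp, ← h]
  exact image_mono (image_mono Ioc_subset_Icc_self)

theorem IsometryEquiv.ediam_image_circleMap_Icc_le (u v : ℝ) :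
    ediam (Φ ∘ circleMap 0 r '' Icc u v) ≤ ENNReal.ofReal (|r| * (v - u)) := by
  rw [image_comp, Φ.ediam_image, ENNReal.ofReal_mul (abs_nonneg r), ← Real.ediam_Icc]
  convert (lipschitzWith_circleMap 0 r).ediam_image_le (Icc u v)
  simp [ENNReal.ofReal, Real.toNNReal_abs]

theorem IsometryEquiv.hausdorffContent_image_circleMap_Icc_inter_le {d : ℝ} (hd : 0 < d)
    {u v : ℝ} (huv : u ≤ v) (E : Set X) :
    hausdorffContent d (Φ ∘ circleMap 0 r '' Icc u v ∩ E) ≤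
      ENNReal.ofReal ((|r| * (v - u)) ^ d) := by
  refine (hausdorffContent_inter_le_ediam_rpow hd _ E).trans ?_
  rw [← ENNReal.ofReal_rpow_of_nonneg (by nlinarith [abs_nonneg r]) hd.le]
  exact ENNReal.rpow_le_rpow (Φ.ediam_image_circleMap_Icc_le u v) hd.le

theorem IsometryEquiv.image_circleMap_subset_sphere (hr : 0 ≤ r) (I : Set ℝ) :
    Φ ∘ circleMap 0 r '' I ⊆ sphere (Φ 0) r := by
  rintro _ ⟨θ, -, rfl⟩
  rw [Function.comp_apply, mem_sphere, Φ.dist_eq]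
  exact circleMap_mem_sphere 0 hr θ

theorem IsometryEquiv.isPreconnected_image_circleMap_Icc (u v : ℝ) :
    IsPreconnected (Φ ∘ circleMap 0 r '' Icc u v) :=
  isPreconnected_Icc.image _ (Φ.continuous.comp (continuous_circleMap 0 r)).continuousOn

theorem IsometryEquiv.le_dist_of_mem_image_circleMap_Icc {α u v u' v' : ℝ} (hα : 0 ≤ α)
    (h₁ : v + α ≤ u') (h₂ : v' + α ≤ u + 2 * π) :
    ∀ y ∈ Φ ∘ circleMap 0 r '' Icc u v, ∀ z ∈ Φ ∘ circleMap 0 r '' Icc u' v',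
      2 * |r| * (α / π) ≤ dist y z := by
  rintro _ ⟨a, ha, rfl⟩ _ ⟨b, hb, rfl⟩
  rw [Function.comp_apply, Function.comp_apply, Φ.dist_eq]
  exact le_dist_circleMap 0 r hα (by linarith [ha.2, hb.1]) (by linarith [ha.1, hb.2])

theorem IsometryEquiv.exists_three_arcs_hausdorffContent_eq {d α : ℝ} (hr : 0 ≤ r)
    (hd : 0 < d) (hα : 0 ≤ α) (E : Set X) {T : ℝ≥0∞}
    (htot : 3 * (T + ENNReal.ofReal ((|r| * α) ^ d)) <
      hausdorffContent d (sphere (Φ 0) r ∩ E)) :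
    ∃ t₁ t₂ t₃, 0 ≤ t₁ ∧ t₁ + α ≤ t₂ ∧ t₂ + α ≤ t₃ ∧ t₃ + α ≤ 2 * π ∧
      hausdorffContent d (Φ ∘ circleMap 0 r '' Icc 0 t₁ ∩ E) = T ∧
      hausdorffContent d (Φ ∘ circleMap 0 r '' Icc (t₁ + α) t₂ ∩ E) = T ∧
      hausdorffContent d (Φ ∘ circleMap 0 r '' Icc (t₂ + α) t₃ ∩ E) = T := by
  set ν := OuterMeasure.restrict E
    (OuterMeasure.ofFunction (fun B => ediam B ^ d) (by simp [hd]))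
  have hν (A : Set X) : ν A = hausdorffContent d (A ∩ E) :=
    (hausdorffContent_inter_eq_restrict_ofFunction hd A E).symm
  have hmod (u v : ℝ) (huv : u ≤ v) :
      ν (Φ ∘ circleMap 0 r '' Icc u v) ≤ ENNReal.ofReal ((|r| * (v - u)) ^ d) :=
    hν _ ▸ Φ.hausdorffContent_image_circleMap_Icc_inter_le hd huv E
  have hω : Tendsto (fun δ => (|r| * δ) ^ d) (𝓝 0) (𝓝 0) := by
    simpa [hd.ne'] using ((continuous_const_mul |r|).rpow_const fun _ => Or.inr hd.le).tendsto 0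
  have hgap (u v : ℝ) (huv : u ≤ v) (hvu : v ≤ u + α) :
      ν (Φ ∘ circleMap 0 r '' Icc u v) ≤ ENNReal.ofReal ((|r| * α) ^ d) := by
    refine (hmod u v huv).trans (ENNReal.ofReal_le_ofReal ?_)
    exact Real.rpow_le_rpow (by nlinarith [abs_nonneg r]) (by gcongr; linarith) hd.le
  have htot' :
      3 * (T + ENNReal.ofReal ((|r| * α) ^ d)) < ν (Φ ∘ circleMap 0 r '' Icc 0 (2 * π)) :=
    htot.trans_le ((hν _).symm.trans_le (measure_mono (Φ.sphere_subset_image_circleMap hr)))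
  simpa only [hν] using exists_three_arcs_measure_eq ν _ hα hω hmod hgap (by positivity) htot'

end Circle

theorem exists_three_separated_arcs_general
    (s : ℝ) (hs0 : 0 < s)
    (x : EuclideanSpace ℝ (Fin 2)) (r : ℝ) (hr : r ∈ Set.Icc (1 / 2 : ℝ) 2)
    (E : Set (EuclideanSpace ℝ (Fin 2))) (η γ : ℝ)
    (hη : hausdorffContent s (Metric.sphere x r ∩ E) = ENNReal.ofReal η)
    (hη0 : 0 < η)
    (hγ : γ = (η / 16) ^ (1 / s)) :
    ∃ hp hm hc : Set (EuclideanSpace ℝ (Fin 2)),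
      (hp ⊆ Metric.sphere x r ∧ IsPreconnected hp) ∧
      (hm ⊆ Metric.sphere x r ∧ IsPreconnected hm) ∧
      (hc ⊆ Metric.sphere x r ∧ IsPreconnected hc) ∧
      (∀ p ∈ hp, ∀ q ∈ hm, π⁻¹ * γ ≤ dist p q) ∧
      (∀ p ∈ hp, ∀ q ∈ hc, π⁻¹ * γ ≤ dist p q) ∧
      (∀ p ∈ hm, ∀ q ∈ hc, π⁻¹ * γ ≤ dist p q) ∧
      (ENNReal.ofReal (η / 8) ≤ hausdorffContent s (hp ∩ E) ∧
        hausdorffContent s (hp ∩ E) ≤ ENNReal.ofReal (3 / 16 * η)) ∧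
      (ENNReal.ofReal (η / 8) ≤ hausdorffContent s (hm ∩ E) ∧
        hausdorffContent s (hm ∩ E) ≤ ENNReal.ofReal (3 / 16 * η)) ∧
      (ENNReal.ofReal (η / 8) ≤ hausdorffContent s (hc ∩ E) ∧
        hausdorffContent s (hc ∩ E) ≤ ENNReal.ofReal (3 / 16 * η)) := by
  obtain ⟨Φ, rfl⟩ : ∃ Φ : ℂ ≃ᵢ EuclideanSpace ℝ (Fin 2), Φ 0 = x :=
    ⟨Complex.orthonormalBasisOneI.repr.toIsometryEquiv.trans (IsometryEquiv.vaddConst x), by simp⟩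
  have hr0 : 0 < r := by linarith [hr.1]
  have hγ0 : 0 ≤ γ := by rw [hγ]; positivity
  have hα : 0 ≤ γ / r := div_nonneg hγ0 hr0.le
  have hγs : (|r| * (γ / r)) ^ s = η / 16 := by
    rw [abs_of_pos hr0, mul_div_cancel₀ γ hr0.ne', hγ, ← Real.rpow_mul (by positivity),
      one_div_mul_cancel hs0.ne', Real.rpow_one]
  have htot : 3 * (ENNReal.ofReal (3 / 16 * η) + ENNReal.ofReal ((|r| * (γ / r)) ^ s)) <
      hausdorffContent s (sphere (Φ 0) r ∩ E) := by
    rw [hη, hγs, ← ENNReal.ofReal_add (by positivity) (by positivity),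
      ← ENNReal.ofReal_ofNat 3, ← ENNReal.ofReal_mul (by norm_num),
      ENNReal.ofReal_lt_ofReal_iff hη0]
    linarith
  obtain ⟨t₁, t₂, t₃, h₀₁, h₁₂, h₂₃, h₃, c₁, c₂, c₃⟩ :=
    Φ.exists_three_arcs_hausdorffContent_eq hr0.le hs0 hα E htot
  have hsep : π⁻¹ * γ ≤ 2 * |r| * (γ / r / π) := by
    rw [abs_of_pos hr0]; field_simp; linarith
  have harc (u v : ℝ) := And.intro (Φ.image_circleMap_subset_sphere hr0.le (Icc u v))
    (Φ.isPreconnected_image_circleMap_Icc (r := r) u v)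
  have hcontent (A : Set (EuclideanSpace ℝ (Fin 2)))
      (h : hausdorffContent s (A ∩ E) = ENNReal.ofReal (3 / 16 * η)) :
      ENNReal.ofReal (η / 8) ≤ hausdorffContent s (A ∩ E) ∧
        hausdorffContent s (A ∩ E) ≤ ENNReal.ofReal (3 / 16 * η) :=
    ⟨h.symm ▸ ENNReal.ofReal_le_ofReal (by linarith), h.le⟩
  refine ⟨_, _, _, harc 0 t₁, harc (t₁ + γ / r) t₂, harc (t₂ + γ / r) t₃, ?_, ?_, ?_,
    hcontent _ c₁, hcontent _ c₂, hcontent _ c₃⟩ <;>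
  · refine fun y hy z hz =>
      hsep.trans (Φ.le_dist_of_mem_image_circleMap_Icc hα ?_ ?_ y hy z hz) <;> linarith

/-- **Extraction of three separated arcs of large content (Step 2 of Theorem 1.2).**
Let `0 < s ≤ 1`, `x ∈ ℝ²`, `r ∈ [1/2, 2]`, `E ⊆ ℝ²`, let `η = H^s_∞(S(x,r) ∩ E) > 0` and
`γ = (η/16)^{1/s} ≤ 1/16`. Then there are three arcs (connected subsets) `h⁺, h⁻, h^×` of
the circle `S(x,r)`, pairwise at distance at least `π⁻¹·γ`, with
`η/8 ≤ H^s_∞(h ∩ E) ≤ (3/16)·η` for each of the three arcs `h`. -/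
theorem exists_three_separated_arcs
    (s : ℝ) (hs0 : 0 < s) (hs1 : s ≤ 1)
    (x : EuclideanSpace ℝ (Fin 2)) (r : ℝ) (hr : r ∈ Set.Icc (1 / 2 : ℝ) 2)
    (E : Set (EuclideanSpace ℝ (Fin 2))) (η γ : ℝ)
    (hη : hausdorffContent s (Metric.sphere x r ∩ E) = ENNReal.ofReal η)
    (hη0 : 0 < η)
    (hγ : γ = (η / 16) ^ (1 / s)) (hγ16 : γ ≤ 1 / 16) :
    ∃ hp hm hc : Set (EuclideanSpace ℝ (Fin 2)),
      (hp ⊆ Metric.sphere x r ∧ IsPreconnected hp) ∧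
      (hm ⊆ Metric.sphere x r ∧ IsPreconnected hm) ∧
      (hc ⊆ Metric.sphere x r ∧ IsPreconnected hc) ∧
      (∀ p ∈ hp, ∀ q ∈ hm, π⁻¹ * γ ≤ dist p q) ∧
      (∀ p ∈ hp, ∀ q ∈ hc, π⁻¹ * γ ≤ dist p q) ∧
      (∀ p ∈ hm, ∀ q ∈ hc, π⁻¹ * γ ≤ dist p q) ∧
      (ENNReal.ofReal (η / 8) ≤ hausdorffContent s (hp ∩ E) ∧
        hausdorffContent s (hp ∩ E) ≤ ENNReal.ofReal (3 / 16 * η)) ∧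
      (ENNReal.ofReal (η / 8) ≤ hausdorffContent s (hm ∩ E) ∧
        hausdorffContent s (hm ∩ E) ≤ ENNReal.ofReal (3 / 16 * η)) ∧
      (ENNReal.ofReal (η / 8) ≤ hausdorffContent s (hc ∩ E) ∧
        hausdorffContent s (hc ∩ E) ≤ ENNReal.ofReal (3 / 16 * η)) :=
  exists_three_separated_arcs_general s hs0 x r hr E η γ hη hη0 hγ
end
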